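/- arXiv:2402.08602 — 4 statements merged into one kernel-verified Lean document; each statement's English description precedes it below -/
import Mathlib

section
/- Let (Tₙ)_{n≥1} be random vectors in ℝ^p and (Wₙ)_{n≥1} random real symmetric positive definite p×p matrices defined on the same probability space, and let θ ∈ ℝ^p. Assume: (i) (multivariate Anscombe condition) for every ε > 0 and every γ ∈ (0,1) there exists δ > 0 such that limsup_{n→∞} ℙ( max_{n′: |n′−n| ≤ δn} ‖T_{n′} − Tₙ‖ ≥ ε·λ_min(Wₙ) ) < γ; (ii) there is a finite constant K such that almost surely κ(Wₙ) := λ_max(Wₙ)/λ_min(Wₙ) ≤ K for all n; (iii) there exist positive reals ρₙ → ∞ and a deterministic real symmetric positive definite matrix W such that ρₙ·Wₙ → W in probability; (iv) Wₙ^{-1}(Tₙ − θ) converges in distribution to the standard p-dimensional Gaussian N_p(0, I_p). Let (Nₙ)_{n≥1} be positive-integer-valued random variables on the same probability space and (rₙ)_{n≥1} an increasing sequence of positive integers with rₙ → ∞ such that Nₙ/rₙ → 1 in probability. Then W_{rₙ}^{-1}(T_{Nₙ} − θ) converges in distribution to N_p(0, I_p). -/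
open MeasureTheory Filter Topology ProbabilityTheory Matrix

/-- The smallest eigenvalue of a real symmetric matrix, via the Rayleigh quotient. -/
noncomputable def lambdaMin {p : ℕ} (M : Matrix (Fin p) (Fin p) ℝ) : ℝ :=
  sInf {r : ℝ | ∃ x : Fin p → ℝ, x ⬝ᵥ x = 1 ∧ r = x ⬝ᵥ M.mulVec x}

/-- The largest eigenvalue of a real symmetric matrix, via the Rayleigh quotient. -/
noncomputable def lambdaMax {p : ℕ} (M : Matrix (Fin p) (Fin p) ℝ) : ℝ :=
  sSup {r : ℝ | ∃ x : Fin p → ℝ, x ⬝ᵥ x = 1 ∧ r = x ⬝ᵥ M.mulVec x}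

/-- The Euclidean norm on `Fin p → ℝ`. -/
noncomputable def euclNorm {p : ℕ} (x : Fin p → ℝ) : ℝ :=
  Real.sqrt (x ⬝ᵥ x)

/-- The standard Gaussian distribution `N_p(0, I_p)` on `ℝ^p`. -/
noncomputable def stdGaussian (p : ℕ) : Measure (Fin p → ℝ) :=
  Measure.pi fun _ => gaussianReal 0 1

/-- Convergence in distribution: the integrals of every bounded continuous function converge. -/
def TendstoInDistribution {Ω : Type*} [MeasurableSpace Ω] {E : Type*}
    [TopologicalSpace E] [MeasurableSpace E] (μ : Measure Ω) (g : ℕ → Ω → E)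
    (ν : Measure E) : Prop :=
  ∀ f : BoundedContinuousFunction E ℝ,
    Tendsto (fun n => ∫ ω, f (g n ω) ∂μ) atTop (𝓝 (∫ x, f x ∂ν))

/-! Split `W_{r_n}⁻¹ (T_{N_n} - θ)` as `W_{r_n}⁻¹ (T_{r_n} - θ) + W_{r_n}⁻¹ (T_{N_n} - T_{r_n})`.
The first term converges in distribution to `N_p(0, I_p)` along the deterministic indices `r_n`.
Since `λ_min(M) ‖M⁻¹ v‖ ≤ ‖v‖`, the Anscombe condition makes `W_n⁻¹ (T_{n'} - T_n)` small in
probability uniformly over the window `|n' - n| ≤ δ n`, and `N_n / r_n → 1` puts `N_n` in the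
window around `r_n` with high probability; so the second term tends to `0` in probability, and
Slutsky's theorem concludes. -/

open scoped ENNReal

section EuclNorm

variable {p : ℕ}

lemma euclNorm_nonneg (x : Fin p → ℝ) : 0 ≤ euclNorm x := Real.sqrt_nonneg _

lemma euclNorm_mul_self (x : Fin p → ℝ) : euclNorm x * euclNorm x = x ⬝ᵥ x :=
  Real.mul_self_sqrt (Finset.sum_nonneg fun i _ => mul_self_nonneg (x i))

lemma dotProduct_le_euclNorm_mul_euclNorm (x y : Fin p → ℝ) :
    x ⬝ᵥ y ≤ euclNorm x * euclNorm y := by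
  simpa [euclNorm, dotProduct, pow_two] using Real.sum_mul_le_sqrt_mul_sqrt Finset.univ x y

lemma norm_le_euclNorm (x : Fin p → ℝ) : ‖x‖ ≤ euclNorm x := by
  have h : euclNorm x = ‖WithLp.toLp 2 x‖ := by
    simp [euclNorm, EuclideanSpace.norm_eq, dotProduct, pow_two]
  rw [h]
  exact (pi_norm_le_iff_of_nonneg (norm_nonneg _)).2 fun i =>
    PiLp.norm_apply_le (WithLp.toLp 2 x) i

end EuclNorm

section Rayleigh

variable {p : ℕ} {M : Matrix (Fin p) (Fin p) ℝ}

lemma Matrix.PosSemidef.rayleigh_nonneg (hM : M.PosSemidef) :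
    ∀ r ∈ {r : ℝ | ∃ x : Fin p → ℝ, x ⬝ᵥ x = 1 ∧ r = x ⬝ᵥ M *ᵥ x}, 0 ≤ r := by
  rintro _ ⟨x, -, rfl⟩
  simpa using hM.dotProduct_mulVec_nonneg x

lemma Matrix.PosSemidef.lambdaMin_nonneg (hM : M.PosSemidef) : 0 ≤ lambdaMin M :=
  Real.sInf_nonneg hM.rayleigh_nonneg

lemma Matrix.PosSemidef.lambdaMin_mul_dotProduct_self_le (hM : M.PosSemidef) (u : Fin p → ℝ) :
    lambdaMin M * (u ⬝ᵥ u) ≤ u ⬝ᵥ M *ᵥ u := by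
  rcases eq_or_ne u 0 with rfl | hu
  · simp
  have hs : 0 < euclNorm u := Real.sqrt_pos.2 (by simpa using dotProduct_star_self_pos_iff.2 hu)
  have hunit : (euclNorm u)⁻¹ • u ⬝ᵥ (euclNorm u)⁻¹ • u = 1 := by
    rw [smul_dotProduct, dotProduct_smul, ← euclNorm_mul_self, smul_eq_mul, smul_eq_mul]
    field_simp
  have hmin : lambdaMin M ≤ (euclNorm u)⁻¹ • u ⬝ᵥ M *ᵥ (euclNorm u)⁻¹ • u :=
    csInf_le ⟨0, hM.rayleigh_nonneg⟩ ⟨_, hunit, rfl⟩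
  rw [mulVec_smul, smul_dotProduct, dotProduct_smul, smul_eq_mul, smul_eq_mul] at hmin
  rw [← euclNorm_mul_self]
  calc lambdaMin M * (euclNorm u * euclNorm u)
      ≤ (euclNorm u)⁻¹ * ((euclNorm u)⁻¹ * (u ⬝ᵥ M *ᵥ u)) * (euclNorm u * euclNorm u) :=
        mul_le_mul_of_nonneg_right hmin (by positivity)
    _ = u ⬝ᵥ M *ᵥ u := by field_simp

lemma Matrix.PosSemidef.lambdaMin_mul_euclNorm_le (hM : M.PosSemidef) (u : Fin p → ℝ) :
    lambdaMin M * euclNorm u ≤ euclNorm (M *ᵥ u) := by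
  rcases (euclNorm_nonneg u).eq_or_lt with h | h
  · rw [← h, mul_zero]
    exact euclNorm_nonneg _
  refine le_of_mul_le_mul_left ?_ h
  calc euclNorm u * (lambdaMin M * euclNorm u) = lambdaMin M * (u ⬝ᵥ u) := by
        rw [← euclNorm_mul_self]; ring
    _ ≤ u ⬝ᵥ M *ᵥ u := hM.lambdaMin_mul_dotProduct_self_le u
    _ ≤ euclNorm u * euclNorm (M *ᵥ u) := dotProduct_le_euclNorm_mul_euclNorm _ _

lemma Matrix.PosDef.lambdaMin_mul_euclNorm_inv_mulVec_le (hM : M.PosDef) (v : Fin p → ℝ) :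
    lambdaMin M * euclNorm (M⁻¹ *ᵥ v) ≤ euclNorm v := by
  simpa [mulVec_mulVec, mul_nonsing_inv _ ((isUnit_iff_isUnit_det M).1 hM.isUnit)] using
    hM.posSemidef.lambdaMin_mul_euclNorm_le (M⁻¹ *ᵥ v)

end Rayleigh

section Measurability

variable {Ω : Type*} [MeasurableSpace Ω]

lemma measurable_inv_mulVec {p : ℕ} :
    Measurable fun q : (Fin p → Fin p → ℝ) × (Fin p → ℝ) => (Matrix.of q.1)⁻¹ *ᵥ q.2 := by
  have hA : Continuous fun q : (Fin p → Fin p → ℝ) × (Fin p → ℝ) => Matrix.of q.1 :=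
    continuous_fst
  simp_rw [inv_def, smul_mulVec, Ring.inverse_eq_inv']
  exact hA.matrix_det.measurable.inv.smul
    (hA.matrix_adjugate.matrix_mulVec continuous_snd).measurable

lemma measurable_inv_mulVec_of_entries {p : ℕ} {A : Ω → Matrix (Fin p) (Fin p) ℝ}
    {v : Ω → Fin p → ℝ} (hA : ∀ i j, Measurable fun ω => A ω i j) (hv : Measurable v) :
    Measurable fun ω => (A ω)⁻¹ *ᵥ v ω := by
  have hA' : Measurable fun ω i j => A ω i j :=
    measurable_pi_lambda _ fun i => measurable_pi_lambda _ (hA i)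
  have hof : ∀ ω, Matrix.of (fun i j => A ω i j) = A ω := fun _ => rfl
  simpa only [Function.comp_def, hof] using measurable_inv_mulVec.comp (hA'.prodMk hv)

lemma measurable_apply_randomIndex {E : Type*} [MeasurableSpace E] {X : ℕ → Ω → E}
    (hX : ∀ n, Measurable (X n)) {N : Ω → ℕ} (hN : Measurable N) :
    Measurable fun ω => X (N ω) ω :=
  (measurable_from_prod_countable_left (f := fun q : Ω × ℕ => X q.2 q.1) hX).comp
    (measurable_id.prodMk hN)

end Measurability

instance (p : ℕ) : IsProbabilityMeasure (_root_.stdGaussian p) := by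
  unfold _root_.stdGaussian
  infer_instance

lemma tendstoInDistribution_iff_measureTheory {Ω E : Type*} [MeasurableSpace Ω]
    [TopologicalSpace E] [MeasurableSpace E] [OpensMeasurableSpace E]
    {μ : Measure Ω} [IsProbabilityMeasure μ] {g : ℕ → Ω → E} (hg : ∀ n, AEMeasurable (g n) μ)
    {ν : Measure E} [IsProbabilityMeasure ν] :
    _root_.TendstoInDistribution μ g ν ↔
      MeasureTheory.TendstoInDistribution g atTop id (fun _ => μ) ν := by
  have hν : (⟨ν.map id, Measure.isProbabilityMeasure_map aemeasurable_id⟩ :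
      ProbabilityMeasure E) = ⟨ν, inferInstance⟩ := by
    simp [Measure.map_id]
  refine ⟨fun h => ⟨hg, aemeasurable_id, ?_⟩, fun h f => ?_⟩
  · rw [hν]
    refine ProbabilityMeasure.tendsto_iff_forall_integral_tendsto.2 fun f => ?_
    simpa [integral_map (hg _) f.continuous.aestronglyMeasurable] using h f
  · have := ProbabilityMeasure.tendsto_iff_forall_integral_tendsto.1 (hν ▸ h.tendsto) f
    simpa [integral_map (hg _) f.continuous.aestronglyMeasurable] using this

/-- `Z n n'` is the increment from index `n` to index `n'`, measured in the scale of index `n`. -/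
def AnscombeCondition {Ω E : Type*} [MeasurableSpace Ω] [Norm E] (μ : Measure Ω)
    (Z : ℕ → ℕ → Ω → E) : Prop :=
  ∀ ε : ℝ, 0 < ε → ∀ γ : ℝ≥0∞, 0 < γ → ∃ δ : ℝ, 0 < δ ∧
    ∀ᶠ n : ℕ in atTop, μ {ω | ∃ n' : ℕ, |(n' : ℝ) - n| ≤ δ * n ∧ ε ≤ ‖Z n n' ω‖} ≤ γ

lemma abs_sub_le_of_abs_div_sub_one_lt {a b δ : ℝ} (hb : 0 < b) (h : |a / b - 1| < δ) :
    |a - b| ≤ δ * b := by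
  rw [div_sub_one hb.ne', abs_div, abs_of_pos hb, div_lt_iff₀ hb] at h
  exact h.le

theorem AnscombeCondition.tendstoInMeasure_zero {Ω E : Type*} [MeasurableSpace Ω]
    [SeminormedAddCommGroup E] {μ : Measure Ω} {Z : ℕ → ℕ → Ω → E} (hZ : AnscombeCondition μ Z)
    {N : ℕ → Ω → ℕ} {r : ℕ → ℕ} (hr : Tendsto r atTop atTop)
    (hNr : TendstoInMeasure μ (fun n ω => (N n ω : ℝ) / r n) atTop fun _ => 1) :
    TendstoInMeasure μ (fun n ω => Z (r n) (N n ω) ω) atTop 0 := by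
  rw [tendstoInMeasure_iff_norm] at hNr ⊢
  intro ε hε
  refine ENNReal.tendsto_nhds_zero.2 fun c hc => ?_
  obtain ⟨δ, hδ, hZδ⟩ := hZ ε hε (c / 2) (ENNReal.half_pos hc.ne')
  have hNδ := ENNReal.tendsto_nhds_zero.1 (hNr δ hδ) (c / 2) (ENNReal.half_pos hc.ne')
  filter_upwards [hr.eventually hZδ, hNδ, hr.eventually (eventually_gt_atTop 0)]
    with n hZn hNn hrn
  have hsub : {ω | ε ≤ ‖Z (r n) (N n ω) ω - (0 : Ω → E) ω‖} ⊆
      {ω | ∃ n' : ℕ, |(n' : ℝ) - r n| ≤ δ * r n ∧ ε ≤ ‖Z (r n) n' ω‖} ∪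
        {ω | δ ≤ ‖(N n ω : ℝ) / r n - 1‖} := by
    intro ω hω
    rcases le_or_gt δ ‖(N n ω : ℝ) / r n - 1‖ with hfar | hnear
    · exact Or.inr hfar
    · exact Or.inl ⟨N n ω, abs_sub_le_of_abs_div_sub_one_lt (by exact_mod_cast hrn) hnear,
        by simpa using hω⟩
  calc _ ≤ _ := measure_mono hsub
    _ ≤ c / 2 + c / 2 := (measure_union_le _ _).trans (add_le_add hZn hNn)
    _ = c := ENNReal.add_halves c

lemma exists_pos_lt_one_ofReal_le {c : ℝ≥0∞} (hc : 0 < c) :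
    ∃ γ : ℝ, 0 < γ ∧ γ < 1 ∧ ENNReal.ofReal γ ≤ c := by
  obtain ⟨γ, -, hγ, hγc⟩ := ENNReal.lt_iff_exists_real_btwn.1 (lt_min hc zero_lt_one)
  exact ⟨γ, ENNReal.ofReal_pos.1 hγ, ENNReal.ofReal_lt_one.1 (hγc.trans_le (min_le_right _ _)),
    hγc.le.trans (min_le_left _ _)⟩

lemma anscombeCondition_inv_mulVec_sub {Ω : Type*} [MeasurableSpace Ω] {μ : Measure Ω} {p : ℕ}
    {T : ℕ → Ω → Fin p → ℝ} {W : ℕ → Ω → Matrix (Fin p) (Fin p) ℝ}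
    (hWpos : ∀ n ω, (W n ω).PosDef)
    (hAnscombe : ∀ ε : ℝ, 0 < ε → ∀ γ : ℝ, 0 < γ → γ < 1 → ∃ δ : ℝ, 0 < δ ∧
      limsup (fun n : ℕ =>
          μ {ω | ∃ n' : ℕ, |(n' : ℝ) - (n : ℝ)| ≤ δ * n ∧
              ε * lambdaMin (W n ω) ≤ euclNorm (T n' ω - T n ω)}) atTop
        < ENNReal.ofReal γ) :
    AnscombeCondition μ fun n n' ω => (W n ω)⁻¹ *ᵥ (T n' ω - T n ω) := by
  intro ε hε c hc
  obtain ⟨γ, hγ, hγ1, hγc⟩ := exists_pos_lt_one_ofReal_le hc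
  obtain ⟨δ, hδ, hlim⟩ := hAnscombe ε hε γ hγ hγ1
  refine ⟨δ, hδ, (eventually_lt_of_limsup_lt hlim).mono fun n hn =>
    (measure_mono ?_).trans (hn.le.trans hγc)⟩
  rintro ω ⟨n', hn', hεn'⟩
  refine ⟨n', hn', ?_⟩
  calc ε * lambdaMin (W n ω) ≤ euclNorm ((W n ω)⁻¹ *ᵥ (T n' ω - T n ω)) * lambdaMin (W n ω) :=
        mul_le_mul_of_nonneg_right (hεn'.trans (norm_le_euclNorm _))
          (hWpos n ω).posSemidef.lambdaMin_nonneg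
    _ = lambdaMin (W n ω) * euclNorm ((W n ω)⁻¹ *ᵥ (T n' ω - T n ω)) := mul_comm _ _
    _ ≤ euclNorm (T n' ω - T n ω) := (hWpos n ω).lambdaMin_mul_euclNorm_inv_mulVec_le _

theorem multivariate_anscombe_general
    {Ω : Type*} [MeasurableSpace Ω] {μ : Measure Ω} [IsProbabilityMeasure μ]
    {p : ℕ} (T : ℕ → Ω → (Fin p → ℝ)) (W : ℕ → Ω → Matrix (Fin p) (Fin p) ℝ)
    (θ : Fin p → ℝ)
    (hTmeas : ∀ n, Measurable (T n)) (hWmeas : ∀ n i j, Measurable fun ω => W n ω i j)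
    (hWpos : ∀ n ω, (W n ω).PosDef)
    -- (i) multivariate Anscombe condition
    (hAnscombe : ∀ ε : ℝ, 0 < ε → ∀ γ : ℝ, 0 < γ → γ < 1 → ∃ δ : ℝ, 0 < δ ∧
      limsup (fun n : ℕ =>
          μ {ω | ∃ n' : ℕ, |(n' : ℝ) - (n : ℝ)| ≤ δ * n ∧
              ε * lambdaMin (W n ω) ≤ euclNorm (T n' ω - T n ω)}) atTop
        < ENNReal.ofReal γ)
    -- (iv) Wₙ⁻¹(Tₙ − θ) converges in distribution to N_p(0, I_p)
    (hCLT : TendstoInDistribution μ (fun n ω => (W n ω)⁻¹.mulVec (T n ω - θ))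
      (stdGaussian p))
    -- random indices
    (N : ℕ → Ω → ℕ) (hNmeas : ∀ n, Measurable (N n))
    (r : ℕ → ℕ)
    (hr : Tendsto r atTop atTop)
    (hNr : TendstoInMeasure μ (fun n ω => (N n ω : ℝ) / (r n : ℝ)) atTop (fun _ => 1)) :
    TendstoInDistribution μ (fun n ω => (W (r n) ω)⁻¹.mulVec (T (N n ω) ω - θ))
      (stdGaussian p) := by
  set X := fun n ω => (W (r n) ω)⁻¹ *ᵥ (T (r n) ω - θ)
  set Y := fun n ω => (W (r n) ω)⁻¹ *ᵥ (T (N n ω) ω - θ)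
  have hXmeas (n : ℕ) : Measurable (X n) :=
    measurable_inv_mulVec_of_entries (hWmeas (r n)) ((hTmeas (r n)).sub_const θ)
  have hYmeas (n : ℕ) : Measurable (Y n) :=
    measurable_inv_mulVec_of_entries (hWmeas (r n))
      ((measurable_apply_randomIndex hTmeas (hNmeas n)).sub_const θ)
  have hX : MeasureTheory.TendstoInDistribution X atTop id (fun _ => μ) (stdGaussian p) :=
    (tendstoInDistribution_iff_measureTheory fun n => (hXmeas n).aemeasurable).1
      fun f => (hCLT f).comp hr
  have hYX : Y - X = fun n ω => (W (r n) ω)⁻¹ *ᵥ (T (N n ω) ω - T (r n) ω) := by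
    funext n ω
    simp only [X, Y, Pi.sub_apply, ← mulVec_sub, sub_sub_sub_cancel_right]
  have hD : TendstoInMeasure μ (Y - X) atTop 0 :=
    hYX ▸ (anscombeCondition_inv_mulVec_sub hWpos hAnscombe).tendstoInMeasure_zero hr hNr
  exact (tendstoInDistribution_iff_measureTheory fun n => (hYmeas n).aemeasurable).2
    (tendstoInDistribution_of_tendstoInMeasure_sub Y id hX hD fun n => (hYmeas n).aemeasurable)

/-- Multivariate Anscombe theorem for randomly indexed sequences (paper's Theorem). -/
theorem multivariate_anscombe
    {Ω : Type*} [MeasurableSpace Ω] {μ : Measure Ω} [IsProbabilityMeasure μ]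
    {p : ℕ} (T : ℕ → Ω → (Fin p → ℝ)) (W : ℕ → Ω → Matrix (Fin p) (Fin p) ℝ)
    (θ : Fin p → ℝ)
    (hTmeas : ∀ n, Measurable (T n)) (hWmeas : ∀ n i j, Measurable fun ω => W n ω i j)
    (hWpos : ∀ n ω, (W n ω).PosDef) (hWsymm : ∀ n ω, (W n ω).IsSymm)
    -- (i) multivariate Anscombe condition
    (hAnscombe : ∀ ε : ℝ, 0 < ε → ∀ γ : ℝ, 0 < γ → γ < 1 → ∃ δ : ℝ, 0 < δ ∧
      limsup (fun n : ℕ =>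
          μ {ω | ∃ n' : ℕ, |(n' : ℝ) - (n : ℝ)| ≤ δ * n ∧
              ε * lambdaMin (W n ω) ≤ euclNorm (T n' ω - T n ω)}) atTop
        < ENNReal.ofReal γ)
    -- (ii) almost surely bounded condition numbers
    (K : ℝ) (hK : ∀ᵐ ω ∂μ, ∀ n, lambdaMax (W n ω) / lambdaMin (W n ω) ≤ K)
    -- (iii) ρₙ Wₙ → W in probability, ρₙ → ∞, W deterministic positive definite
    (ρ : ℕ → ℝ) (hρpos : ∀ n, 0 < ρ n) (hρ : Tendsto ρ atTop atTop)
    (Wlim : Matrix (Fin p) (Fin p) ℝ) (hWlimpos : Wlim.PosDef) (hWlimsymm : Wlim.IsSymm)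
    (hWlim : ∀ i j, TendstoInMeasure μ (fun n ω => ρ n * W n ω i j) atTop
      (fun _ => Wlim i j))
    -- (iv) Wₙ⁻¹(Tₙ − θ) converges in distribution to N_p(0, I_p)
    (hCLT : TendstoInDistribution μ (fun n ω => (W n ω)⁻¹.mulVec (T n ω - θ))
      (stdGaussian p))
    -- random indices
    (N : ℕ → Ω → ℕ) (hNmeas : ∀ n, Measurable (N n)) (hNpos : ∀ n ω, 0 < N n ω)
    (r : ℕ → ℕ) (hrmono : Monotone r) (hrpos : ∀ n, 0 < r n)
    (hr : Tendsto r atTop atTop)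
    (hNr : TendstoInMeasure μ (fun n ω => (N n ω : ℝ) / (r n : ℝ)) atTop (fun _ => 1)) :
    TendstoInDistribution μ (fun n ω => (W (r n) ω)⁻¹.mulVec (T (N n ω) ω - θ))
      (stdGaussian p) :=
  multivariate_anscombe_general T W θ hTmeas hWmeas hWpos hAnscombe hCLT N hNmeas r hr hNr
end

section
/- Let Σ be a real symmetric positive definite p×p matrix, H a real symmetric p×p matrix, and q > 0 a real number. For a real symmetric positive semidefinite matrix M with spectral decomposition M = U·diag(λ₁,…,λ_p)·Uᵀ (U orthogonal), define M^q = U·diag(λ₁^q,…,λ_p^q)·Uᵀ. Then tr((Σ + εH)^q) − tr(Σ^q) = ε·q·tr(Σ^{q−1}·H) + o(ε) as ε → 0; that is, the function ε ↦ tr((Σ + εH)^q), defined for all ε small enough that Σ + εH is positive definite, is differentiable at ε = 0 with derivative q·tr(Σ^{q−1}·H). -/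
/-! For a polynomial `P`, cyclicity of the trace gives `d/dε tr P(S + εH) = tr (P'(S + εH) H)`.
By a Weyl-type bound the spectra of `S + εH` stay, for small `ε`, in a compact interval
`[a, b] ⊂ (0, ∞)`, on which `x ↦ x^q` is a `C¹`-uniform limit of polynomials `P_k` (Weierstrass
applied to `q x^(q-1)`, then integrated). The functional calculus is isometric for the operator
norm, so `tr P_k(S + εH)` and its derivative converge uniformly in `ε`, and the derivative
formula passes to the limit. -/

open Matrix

/-- Real power of a symmetric matrix, defined through the spectral decomposition:
if `M = U·diag(λ₁,…,λ_p)·Uᵀ` then `M^q = U·diag(λ₁^q,…,λ_p^q)·Uᵀ`. -/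
noncomputable def hermRpow {p : ℕ} (M : Matrix (Fin p) (Fin p) ℝ) (q : ℝ) :
    Matrix (Fin p) (Fin p) ℝ :=
  if hM : M.IsHermitian then
    (hM.eigenvectorUnitary : Matrix (Fin p) (Fin p) ℝ) *
      Matrix.diagonal (fun i => hM.eigenvalues i ^ q) *
      ((hM.eigenvectorUnitary : Matrix (Fin p) (Fin p) ℝ))ᵀ
  else 0

open Polynomial Set Filter Topology

theorem Polynomial.exists_derivative_eq {K : Type*} [Field K] [CharZero K] (Q : K[X]) :
    ∃ P : K[X], derivative P = Q := by
  refine ⟨Q.sum fun k c => C (c / (k + 1)) * X ^ (k + 1), ?_⟩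
  rw [Polynomial.sum, map_sum]
  conv_rhs => rw [← Q.sum_C_mul_X_pow_eq, Polynomial.sum]
  refine Finset.sum_congr rfl fun k _ => ?_
  rw [derivative_C_mul_X_pow, Nat.add_sub_cancel, Nat.cast_succ,
    div_mul_cancel₀ _ (Nat.cast_add_one_ne_zero k)]

theorem exists_polynomial_tendstoUniformlyOn {f : ℝ → ℝ} {a b : ℝ}
    (hf : ContinuousOn f (Icc a b)) :
    ∃ P : ℕ → ℝ[X], TendstoUniformlyOn (fun k x => (P k).eval x) f atTop (Icc a b) := by
  choose P hP using fun k : ℕ =>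
    exists_polynomial_near_of_continuousOn a b f hf (1 / (k + 1)) Nat.one_div_pos_of_nat
  refine ⟨P, Metric.tendstoUniformlyOn_iff.2 fun η hη => ?_⟩
  obtain ⟨N, hN⟩ := exists_nat_one_div_lt hη
  filter_upwards [eventually_ge_atTop N] with k hk x hx
  rw [dist_comm, Real.dist_eq]
  refine (hP k x hx).trans (lt_of_le_of_lt ?_ hN)
  gcongr

theorem tendstoUniformlyOn_Icc_of_hasDerivWithinAt {ι : Type*} {l : Filter ι}
    {F F' : ι → ℝ → ℝ} {f f' : ℝ → ℝ} {a b : ℝ}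
    (hF : ∀ k, ∀ x ∈ Icc a b, HasDerivWithinAt (F k) (F' k x) (Icc a b) x)
    (hf : ∀ x ∈ Icc a b, HasDerivWithinAt f (f' x) (Icc a b) x)
    (hF' : TendstoUniformlyOn F' f' l (Icc a b)) (ha : ∀ k, F k a = f a) :
    TendstoUniformlyOn F f l (Icc a b) := by
  rw [Metric.tendstoUniformlyOn_iff] at hF' ⊢
  intro η hη
  filter_upwards [hF' (η / (|b - a| + 1)) (by positivity)] with k hk x hx
  have hmvt := (convex_Icc a b).norm_image_sub_le_of_norm_hasDerivWithin_le
    (fun y hy => (hf y hy).sub (hF k y hy)) (fun y hy => (hk y hy).le)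
    (left_mem_Icc.2 (hx.1.trans hx.2)) hx
  rw [Pi.sub_apply, Pi.sub_apply, ha k, sub_self, sub_zero, ← dist_eq_norm, Real.norm_eq_abs,
    abs_of_nonneg (sub_nonneg.2 hx.1)] at hmvt
  calc dist (f x) (F k x) ≤ η / (|b - a| + 1) * (x - a) := hmvt
    _ < η := by
      rw [div_mul_eq_mul_div, div_lt_iff₀ (by positivity)]
      nlinarith [hx.1, hx.2, le_abs_self (b - a)]

theorem exists_polynomial_tendstoUniformlyOn_and_deriv {f f' : ℝ → ℝ} {a b : ℝ}
    (hf : ∀ x ∈ Icc a b, HasDerivWithinAt f (f' x) (Icc a b) x)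
    (hf' : ContinuousOn f' (Icc a b)) :
    ∃ P : ℕ → ℝ[X], TendstoUniformlyOn (fun k x => (P k).eval x) f atTop (Icc a b) ∧
      TendstoUniformlyOn (fun k x => (derivative (P k)).eval x) f' atTop (Icc a b) := by
  obtain ⟨Q, hQ⟩ := exists_polynomial_tendstoUniformlyOn hf'
  choose R hR using fun k => (Q k).exists_derivative_eq
  let P k := R k + C (f a - (R k).eval a)
  have hP : ∀ k, derivative (P k) = Q k := fun k => by simp [P, hR]
  refine ⟨P, tendstoUniformlyOn_Icc_of_hasDerivWithinAt (fun k x _ => ?_) hf hQ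
    (fun k => by simp [P]), by simpa only [hP] using hQ⟩
  exact hP k ▸ ((P k).hasDerivAt x).hasDerivWithinAt

section
variable {ι 𝕜 A : Type*} {p : A → Prop} [RCLike 𝕜] [NormedRing A] [StarRing A]
  [NormedAlgebra 𝕜 A] [IsometricContinuousFunctionalCalculus 𝕜 A p]

theorem tendstoUniformlyOn_cfc_fun {l : Filter ι} {F : ι → 𝕜 → 𝕜} {f : 𝕜 → 𝕜} {s : Set 𝕜}
    (h : TendstoUniformlyOn F f l s) (hF : ∀ i, ContinuousOn (F i) s) (hf : ContinuousOn f s) :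
    TendstoUniformlyOn (fun i a => cfc (F i) a) (cfc f) l {a : A | p a ∧ spectrum 𝕜 a ⊆ s} := by
  rw [Metric.tendstoUniformlyOn_iff] at h ⊢
  intro η hη
  filter_upwards [h (η / 2) (half_pos hη)] with i hi a ⟨ha, hs⟩
  rw [dist_eq_norm, ← cfc_sub f (F i) a (hf.mono hs) ((hF i).mono hs)]
  refine (norm_cfc_le (half_pos hη).le fun x hx => ?_).trans_lt (half_lt_self hη)
  exact (dist_eq_norm (f x) (F i x) ▸ hi x (hs hx)).le

end

section
variable {A : Type*} [TopologicalSpace A] [Ring A] [StarRing A] [PartialOrder A]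
  [StarOrderedRing A] [Algebra ℝ A] [ContinuousFunctionalCalculus ℝ A IsSelfAdjoint]
  [NonnegSpectrumClass ℝ A]

theorem spectrum_add_smul_subset_Icc {a b : A} (ha : IsSelfAdjoint a) (hb : IsSelfAdjoint b)
    {r s c : ℝ} (has : spectrum ℝ a ⊆ Icc r s) (hbc : spectrum ℝ b ⊆ Icc (-c) c) (t : ℝ) :
    spectrum ℝ (a + t • b) ⊆ Icc (r - |t| * c) (s + |t| * c) := by
  have hbound : ∀ x ∈ spectrum ℝ b, |t * x| ≤ |t| * c := fun x hx => by
    rw [abs_mul]; exact mul_le_mul_of_nonneg_left (abs_le.2 (hbc hx)) (abs_nonneg t)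
  have htb : t • b = cfc (fun x => t * x) b := (cfc_smul_id t b).symm
  have hlow : algebraMap ℝ A (r - |t| * c) ≤ a + t • b := by
    rw [sub_eq_add_neg, map_add, htb]
    exact add_le_add (algebraMap_le_of_le_spectrum fun x hx => (has hx).1)
      (algebraMap_le_cfc _ _ _ fun x hx => neg_le_of_abs_le (hbound x hx))
  have hup : a + t • b ≤ algebraMap ℝ A (s + |t| * c) := by
    rw [map_add, htb]
    exact add_le_add (le_algebraMap_of_spectrum_le fun x hx => (has hx).2)
      (cfc_le_algebraMap _ _ _ fun x hx => le_of_abs_le (hbound x hx))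
  have hab : IsSelfAdjoint (a + t • b) := htb ▸ ha.add (cfc_predicate _ b)
  exact fun x hx => ⟨(algebraMap_le_iff_le_spectrum hab).1 hlow x hx,
    (le_algebraMap_iff_spectrum_le hab).1 hup x hx⟩

end

theorem IsCompact.exists_pos_subset_Icc {K : Set ℝ} (hK : IsCompact K) (hpos : K ⊆ Ioi 0) :
    ∃ r > 0, ∃ s, K ⊆ Icc r s := by
  rcases K.eq_empty_or_nonempty with rfl | hne
  · exact ⟨1, one_pos, 1, empty_subset _⟩
  obtain ⟨x, hx, hmin⟩ := hK.exists_isMinOn hne continuousOn_id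
  obtain ⟨y, -, hmax⟩ := hK.exists_isMaxOn hne continuousOn_id
  exact ⟨x, hpos hx, y, fun z hz => ⟨hmin hz, hmax hz⟩⟩

open scoped MatrixOrder in
theorem Matrix.PosDef.exists_spectrum_add_smul_subset_Icc {n : Type*} [Fintype n] [DecidableEq n]
    {S H : Matrix n n ℝ} (hS : S.PosDef) (hH : H.IsHermitian) :
    ∃ a > 0, ∃ b, ∃ δ > 0, ∀ ε ∈ Metric.ball (0 : ℝ) δ, spectrum ℝ (S + ε • H) ⊆ Icc a b := by
  have hS_pos : spectrum ℝ S ⊆ Ioi 0 := by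
    rw [hS.isHermitian.spectrum_real_eq_range_eigenvalues]
    exact range_subset_iff.2 hS.eigenvalues_pos
  obtain ⟨r, hr, s, hS_spec⟩ :=
    (ContinuousFunctionalCalculus.isCompact_spectrum S).exists_pos_subset_Icc hS_pos
  obtain ⟨c, hc, hH_spec⟩ :=
    (ContinuousFunctionalCalculus.isCompact_spectrum (R := ℝ) H).isBounded
      |>.subset_closedBall_lt 0 0
  rw [Real.closedBall_eq_Icc, zero_sub, zero_add] at hH_spec
  refine ⟨r / 2, half_pos hr, s + r / 2, r / (2 * c), by positivity, fun ε hε => ?_⟩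
  have hεc : |ε| * c ≤ r / 2 := by
    rw [Metric.mem_ball, dist_zero_right, Real.norm_eq_abs, lt_div_iff₀ (by positivity)] at hε
    linarith
  exact (spectrum_add_smul_subset_Icc hS.isHermitian.isSelfAdjoint hH.isSelfAdjoint hS_spec
    hH_spec ε).trans (Icc_subset_Icc (by linarith) (by linarith))

section
variable {𝕜 n : Type*} [NontriviallyNormedField 𝕜] [CompleteSpace 𝕜] [Fintype n] [DecidableEq n]

attribute [local instance] Matrix.linftyOpNormedAddCommGroup Matrix.linftyOpNormedRing
  Matrix.linftyOpNormedAlgebra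

theorem hasDerivAt_trace_pow_add_smul (S H : Matrix n n 𝕜) (k : ℕ) (e : 𝕜) :
    HasDerivAt (fun ε : 𝕜 => trace ((S + ε • H) ^ k))
      (k * trace ((S + e • H) ^ (k - 1) * H)) e := by
  set A := S + e • H
  have hA : HasDerivAt (fun ε : 𝕜 => S + ε • H) H e :=
    (((hasDerivAt_id e).smul_const H).const_add S).congr_deriv (one_smul _ H)
  have hpow : HasDerivAt (fun ε : 𝕜 => (S + ε • H) ^ k)
      (∑ i ∈ Finset.range k, A ^ (k.pred - i) * H * A ^ i) e := by
    refine ((hasDerivAt_iff_hasFDerivAt.1 hA).fun_pow' k).hasDerivAt.congr_deriv ?_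
    simp only [A, _root_.sum_apply]
    refine Finset.sum_congr rfl fun i _ => ?_
    change _ * ((1 : 𝕜) • H) * _ = _
    rw [one_smul, MulOpposite.unop_op]
  let L : Matrix n n 𝕜 →L[𝕜] 𝕜 := LinearMap.toContinuousLinearMap (traceLinearMap n 𝕜 𝕜)
  refine (L.hasFDerivAt.comp_hasDerivAt e hpow).congr_deriv ?_
  change trace _ = _
  rw [trace_sum, Finset.sum_congr rfl fun i hi => ?_, Finset.sum_const, Finset.card_range,
    nsmul_eq_mul]
  rw [trace_mul_cycle, ← pow_add, Nat.pred_eq_sub_one,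
    Nat.add_sub_of_le (Nat.le_sub_one_of_lt (Finset.mem_range.1 hi))]

theorem hasDerivAt_trace_aeval_add_smul (S H : Matrix n n 𝕜) (P : 𝕜[X]) (e : 𝕜) :
    HasDerivAt (fun ε : 𝕜 => trace (aeval (S + ε • H) P))
      (trace (aeval (S + e • H) (derivative P) * H)) e := by
  induction P using Polynomial.induction_on' with
  | add P Q hP hQ =>
    simpa only [map_add, trace_add, Matrix.add_mul] using hP.fun_add hQ
  | monomial k c =>
    simpa only [aeval_monomial, derivative_monomial, Algebra.algebraMap_eq_smul_one,
      smul_mul_assoc, one_mul, trace_smul, smul_eq_mul, Nat.cast_id, map_natCast, mul_assoc]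
      using (hasDerivAt_trace_pow_add_smul S H k e).const_mul c

end

section
variable {n : Type*} [Fintype n] [DecidableEq n]

theorem tendstoUniformlyOn_trace_cfc_mul {ι α : Type*} {l : Filter ι} {F : ι → ℝ → ℝ}
    {f : ℝ → ℝ} {s : Set ℝ} (h : TendstoUniformlyOn F f l s) (hF : ∀ i, ContinuousOn (F i) s)
    (hf : ContinuousOn f s) {A : α → Matrix n n ℝ} {U : Set α}
    (hA : ∀ x ∈ U, IsSelfAdjoint (A x) ∧ spectrum ℝ (A x) ⊆ s) (X : Matrix n n ℝ) :
    TendstoUniformlyOn (fun i x => trace (cfc (F i) (A x) * X))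
      (fun x => trace (cfc f (A x) * X)) l U := by
  open scoped Matrix.Norms.L2Operator in
  let L : Matrix n n ℝ →L[ℝ] ℝ :=
    LinearMap.toContinuousLinearMap ((traceLinearMap n ℝ ℝ).comp (LinearMap.mulRight ℝ X))
  exact L.uniformContinuous.comp_tendstoUniformlyOn
    (((tendstoUniformlyOn_cfc_fun h hF hf).comp A).mono hA)

theorem hasDerivAt_trace_cfc_add_smul {f f' : ℝ → ℝ} {a b : ℝ}
    (hf : ∀ x ∈ Icc a b, HasDerivWithinAt f (f' x) (Icc a b) x)
    (hf' : ContinuousOn f' (Icc a b)) {S H : Matrix n n ℝ} (hS : S.IsHermitian)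
    (hH : H.IsHermitian) {U : Set ℝ} (hU : IsOpen U)
    (hspec : ∀ ε ∈ U, spectrum ℝ (S + ε • H) ⊆ Icc a b) {e : ℝ} (he : e ∈ U) :
    HasDerivAt (fun ε => trace (cfc f (S + ε • H))) (trace (cfc f' (S + e • H) * H)) e := by
  obtain ⟨P, hP, hP'⟩ := exists_polynomial_tendstoUniformlyOn_and_deriv hf hf'
  have hsa : ∀ ε : ℝ, IsSelfAdjoint (S + ε • H) := fun ε =>
    hS.isSelfAdjoint.add ((IsSelfAdjoint.all ε).smul hH.isSelfAdjoint)
  have hA : ∀ ε ∈ U, IsSelfAdjoint (S + ε • H) ∧ spectrum ℝ (S + ε • H) ⊆ Icc a b :=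
    fun ε hε => ⟨hsa ε, hspec ε hε⟩
  have hcfc : ∀ (Q : ℝ[X]) (ε : ℝ), cfc (fun x => Q.eval x) (S + ε • H) = aeval (S + ε • H) Q :=
    fun Q ε => cfc_polynomial Q _ (hsa ε)
  have hfc : ContinuousOn f (Icc a b) := fun x hx => (hf x hx).continuousWithinAt
  refine hasDerivAt_of_tendstoUniformlyOn (l := atTop)
    (g := fun ε => trace (cfc f (S + ε • H))) (g' := fun ε => trace (cfc f' (S + ε • H) * H)) hU ?_
    (Eventually.of_forall fun k ε _ => hasDerivAt_trace_aeval_add_smul S H (P k) ε)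
    (fun ε hε => ?_) he
  · simpa only [hcfc] using
      tendstoUniformlyOn_trace_cfc_mul hP' (fun k => (P k).derivative.continuousOn) hf' hA H
  · simpa only [hcfc, Matrix.mul_one] using
      (tendstoUniformlyOn_trace_cfc_mul hP (fun k => (P k).continuousOn) hfc hA 1).tendsto_at hε

end

theorem hermRpow_eq_cfc {p : ℕ} {M : Matrix (Fin p) (Fin p) ℝ} (hM : M.IsHermitian) (q : ℝ) :
    hermRpow M q = cfc (fun x : ℝ => x ^ q) M := by
  rw [hM.cfc_eq, IsHermitian.cfc, hermRpow, dif_pos hM]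
  simp only [RCLike.ofReal_real_eq_id, CompTriple.comp_eq, Unitary.conjStarAlgAut_apply,
    star_eq_conjTranspose, conjTranspose_eq_transpose_of_trivial]
  rfl

theorem trace_rpow_gateaux_deriv_general {p : ℕ} (S H : Matrix (Fin p) (Fin p) ℝ)
    (hS : S.PosDef) (hH : H.IsSymm) (q : ℝ) :
    HasDerivAt (fun ε : ℝ => Matrix.trace (hermRpow (S + ε • H) q))
      (q * Matrix.trace (hermRpow S (q - 1) * H)) 0 := by
  have hH' : H.IsHermitian := isHermitian_iff_isSymm.2 hH
  obtain ⟨a, ha, b, δ, hδ, hspec⟩ := hS.exists_spectrum_add_smul_subset_Icc hH'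
  have hne : ∀ x ∈ Icc a b, x ≠ 0 := fun x hx => (ha.trans_le hx.1).ne'
  have key := hasDerivAt_trace_cfc_add_smul (f := fun x => x ^ q) (f' := fun x => q * x ^ (q - 1))
    (fun x hx => (Real.hasDerivAt_rpow_const (Or.inl (hne x hx))).hasDerivWithinAt)
    (continuousOn_const.mul (continuousOn_id.rpow_const fun x hx => Or.inl (hne x hx)))
    hS.isHermitian hH' Metric.isOpen_ball hspec (Metric.mem_ball_self hδ)
  have hS_spec : spectrum ℝ S ⊆ Icc a b := by simpa using hspec 0 (Metric.mem_ball_self hδ)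
  have hcont : ContinuousOn (fun x : ℝ => x ^ (q - 1)) (spectrum ℝ S) :=
    continuousOn_id.rpow_const fun x hx => Or.inl (hne x (hS_spec hx))
  simp only [zero_smul, add_zero, cfc_const_mul q _ S hcont, smul_mul_assoc, trace_smul,
    smul_eq_mul] at key
  have hSH : ∀ ε : ℝ, (S + ε • H).IsHermitian := fun ε =>
    hS.isHermitian.add (hH'.smul (IsSelfAdjoint.all ε))
  simpa only [hermRpow_eq_cfc (hSH _), hermRpow_eq_cfc hS.isHermitian] using key

/-- First-order trace expansion of `ε ↦ tr((Σ + εH)^q)` at `ε = 0` for a real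
exponent `q > 0`: the derivative is `q·tr(Σ^{q−1}·H)`. -/
theorem trace_rpow_gateaux_deriv {p : ℕ} (S H : Matrix (Fin p) (Fin p) ℝ)
    (hS : S.PosDef) (hH : H.IsSymm) (q : ℝ) (hq : 0 < q) :
    HasDerivAt (fun ε : ℝ => Matrix.trace (hermRpow (S + ε • H) q))
      (q * Matrix.trace (hermRpow S (q - 1) * H)) 0 :=
  trace_rpow_gateaux_deriv_general S H hS hH q
end

section
/- Let (𝔉ₙ)_{n≥1} be a filtration, and let (aₙ)_{n≥1}, (cₙ)_{n≥1} be integrable real random variables and (Zₙ)_{n≥1} nonnegative integrable real random variables, all adapted to (𝔉ₙ). Write aₙ^- = max(0, −aₙ). Assume 𝔼[Z_{n+1} | 𝔉ₙ] ≤ (1 − aₙ)·Zₙ + cₙ almost surely for all n ≥ 1, that Σ_{n=1}^∞ aₙ^- < ∞ almost surely, and that the series Σ_{n=1}^∞ cₙ converges almost surely to a finite limit. Then there exists a nonnegative, almost surely finite random variable Z_∞ such that Zₙ → Z_∞ almost surely. -/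
/-!
Put `Pₙ = ∏_{k<n} (1 + aₖ⁻)` and `Sₙ = ∑_{k<n} cₖ / P_{k+1}`. Dividing the recursion by the
predictable factor `P_{n+1}` and using `1 - aₙ ≤ 1 + aₙ⁻` shows that `Xₙ = Zₙ / Pₙ - Sₙ` is a
supermartingale; moreover `Xₙ + Sₙ ≥ 0` and `S` is predictable. Stopping `X` just before `S`
exceeds a level `M` gives a supermartingale bounded below by `-M`, which converges, so `X`
converges wherever `S` is bounded above. Almost surely `P` converges because `∑ aₙ⁻ < ∞`, and `S`
converges by Abel's test because `1 / P_{k+1}` decreases; hence so does `Zₙ = Pₙ (Xₙ + Sₙ)`.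
-/

open MeasureTheory Filter Topology Finset

theorem Antitone.cauchySeq_series_mul_of_cauchySeq_series {r g : ℕ → ℝ} (hr : Antitone r)
    (hr_bdd : BddBelow (Set.range r)) (hg : CauchySeq fun N => ∑ i ∈ range N, g i) :
    CauchySeq fun N => ∑ i ∈ range N, r i * g i := by
  obtain ⟨L, hL⟩ : ∃ L, Tendsto r atTop (𝓝 L) := ⟨_, tendsto_atTop_ciInf hr hr_bdd⟩
  have hrL : Tendsto (fun n => r n - L) atTop (𝓝 0) := by
    simpa only [sub_self] using hL.sub_const L
  have hrL_anti : Antitone fun n => r n - L := fun i j hij => sub_le_sub_right (hr hij) L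
  obtain ⟨B, hB⟩ := isBounded_iff_forall_norm_le.mp hg.isBounded_range
  have hshifted : CauchySeq fun N => ∑ i ∈ range N, (r i - L) • g i :=
    hrL_anti.cauchySeq_series_mul_of_tendsto_zero_of_bounded hrL fun n =>
      hB _ (Set.mem_range_self n)
  convert hshifted.add ((uniformContinuous_const_smul L).comp_cauchySeq hg) using 1
  ext N
  simp only [Pi.add_apply, Function.comp_apply, smul_eq_mul, mul_sum, ← sum_add_distrib]
  exact sum_congr rfl fun i _ => by ring

namespace MeasureTheory

variable {Ω : Type*} {m0 : MeasurableSpace Ω} {μ : Measure Ω}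

theorem Submartingale.exists_ae_tendsto_of_bddAbove [IsFiniteMeasure μ]
    {ℱ : Filtration ℕ m0} {f : ℕ → Ω → ℝ} (hf : Submartingale f ℱ μ) {R : ℝ}
    (hR : ∀ n, ∀ᵐ ω ∂μ, f n ω ≤ R) :
    ∀ᵐ ω ∂μ, ∃ c, Tendsto (fun n => f n ω) atTop (𝓝 c) := by
  set R' := max R 0
  set B := 2 * R' * μ.real Set.univ - ∫ ω, f 0 ω ∂μ
  refine hf.exists_ae_tendsto_of_bdd (R := B.toNNReal) fun n => ?_
  have habs : ∀ᵐ ω ∂μ, |f n ω| ≤ 2 * R' - f n ω := by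
    filter_upwards [hR n] with ω hω
    rw [abs_le]
    constructor <;> linarith [le_max_left R 0, le_max_right R 0]
  have hint : ∫ ω, |f n ω| ∂μ ≤ B := calc
    ∫ ω, |f n ω| ∂μ ≤ ∫ ω, (2 * R' - f n ω) ∂μ :=
      integral_mono_ae (hf.integrable n).abs ((integrable_const _).sub (hf.integrable n)) habs
    _ = 2 * R' * μ.real Set.univ - ∫ ω, f n ω ∂μ := by
      rw [integral_sub (integrable_const _) (hf.integrable n), integral_const, smul_eq_mul,
        mul_comm]
    _ ≤ B := by
      have := hf.setIntegral_le (Nat.zero_le n) MeasurableSet.univ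
      simp only [Measure.restrict_univ] at this
      linarith
  rw [eLpNorm_one_eq_lintegral_enorm,
    ← ofReal_integral_norm_eq_lintegral_enorm (hf.integrable n)]
  exact ENNReal.ofReal_le_ofReal hint

theorem stoppedProcess_hittingAfter_succ_Ioi_le {u : ℕ → Ω → ℝ} {M : ℝ} {ω : Ω}
    (h0 : u 0 ω ≤ M) (n : ℕ) :
    stoppedProcess u (hittingAfter (fun k => u (k + 1)) (Set.Ioi M) 0) n ω ≤ M := by
  set τ := hittingAfter (fun k => u (k + 1)) (Set.Ioi M) 0
  have before : ∀ j : ℕ, (j : WithTop ℕ) ≤ τ ω → u j ω ≤ M := by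
    rintro (_ | k) hk
    · exact h0
    · have hlt : (k : WithTop ℕ) < τ ω :=
        lt_of_lt_of_le (by exact_mod_cast k.lt_succ_self) hk
      simpa using notMem_of_lt_hittingAfter hlt (Nat.zero_le k)
  rcases le_total (n : WithTop ℕ) (τ ω) with h | h
  · rw [stoppedProcess_eq_of_le (i := n) h]
    exact before n h
  · rw [stoppedProcess_eq_of_ge (i := n) h]
    lift τ ω to ℕ using ne_top_of_le_ne_top (by simp) h with j
    exact before j le_rfl

theorem Supermartingale.ae_exists_tendsto_of_bddAbove_of_add_nonneg
    [IsFiniteMeasure μ] {ℱ : Filtration ℕ m0} {X S : ℕ → Ω → ℝ}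
    (hX : Supermartingale X ℱ μ) (hS : Adapted ℱ fun n => S (n + 1)) (hS0 : S 0 = 0)
    (hXS : ∀ n, ∀ᵐ ω ∂μ, 0 ≤ X n ω + S n ω) :
    ∀ᵐ ω ∂μ, BddAbove (Set.range fun n => S n ω) →
      ∃ c, Tendsto (fun n => X n ω) atTop (𝓝 c) := by
  set τ : ℕ → Ω → WithTop ℕ := fun M =>
    hittingAfter (fun k => S (k + 1)) (Set.Ioi (M : ℝ)) 0
  have hstopped (M : ℕ) :
      ∀ᵐ ω ∂μ, ∃ c, Tendsto (fun n => stoppedProcess (-X) (τ M) n ω) atTop (𝓝 c) := by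
    have hτ : IsStoppingTime ℱ (τ M) := hS.isStoppingTime_hittingAfter measurableSet_Ioi
    refine (hX.neg.stoppedProcess hτ).exists_ae_tendsto_of_bddAbove (R := M) fun n => ?_
    filter_upwards [ae_all_iff.mpr hXS] with ω hω
    calc stoppedProcess (-X) (τ M) n ω ≤ stoppedProcess S (τ M) n ω :=
          neg_le_iff_add_nonneg'.mpr (hω _)
      _ ≤ M := stoppedProcess_hittingAfter_succ_Ioi_le (by simp [hS0]) n
  filter_upwards [ae_all_iff.mpr hstopped] with ω hω ⟨B, hB⟩
  obtain ⟨M, hM⟩ := exists_nat_ge B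
  have hτ_top : τ M ω = ⊤ :=
    hittingAfter_eq_top_iff.mpr fun j _ => not_lt.mpr ((hB ⟨j + 1, rfl⟩).trans hM)
  obtain ⟨c, hc⟩ := hω M
  refine ⟨-c, hc.neg.congr fun n => ?_⟩
  rw [stoppedProcess_eq_of_le (i := n) (hτ_top ▸ le_top)]
  simp

end MeasureTheory

namespace RobbinsSiegmund

variable {Ω : Type*} {m0 : MeasurableSpace Ω} {μ : Measure Ω}

noncomputable def growthFactor (a : ℕ → Ω → ℝ) (n : ℕ) (ω : Ω) : ℝ :=
  ∏ k ∈ range n, (1 + max 0 (-a k ω))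

noncomputable def discountedSum (a c : ℕ → Ω → ℝ) (n : ℕ) (ω : Ω) : ℝ :=
  ∑ k ∈ range n, c k ω / growthFactor a (k + 1) ω

variable {a c Z : ℕ → Ω → ℝ}

lemma one_le_growthFactor (a : ℕ → Ω → ℝ) (n : ℕ) (ω : Ω) : 1 ≤ growthFactor a n ω :=
  one_le_prod fun _ _ => le_add_of_nonneg_right (le_max_left _ _)

lemma growthFactor_pos (a : ℕ → Ω → ℝ) (n : ℕ) (ω : Ω) : 0 < growthFactor a n ω :=
  one_pos.trans_le (one_le_growthFactor a n ω)

lemma growthFactor_succ (a : ℕ → Ω → ℝ) (n : ℕ) (ω : Ω) :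
    growthFactor a (n + 1) ω = growthFactor a n ω * (1 + max 0 (-a n ω)) :=
  prod_range_succ _ _

lemma monotone_growthFactor (a : ℕ → Ω → ℝ) (ω : Ω) : Monotone fun n => growthFactor a n ω :=
  monotone_nat_of_le_succ fun n => by
    rw [growthFactor_succ]
    exact le_mul_of_one_le_right (growthFactor_pos a n ω).le
      (le_add_of_nonneg_right (le_max_left _ _))

lemma exists_tendsto_growthFactor {ω : Ω} (ha : Summable fun n => max 0 (-a n ω)) :
    ∃ L, Tendsto (fun n => growthFactor a n ω) atTop (𝓝 L) :=
  ⟨_, (Real.multipliable_one_add_of_summable ha).tendsto_prod_tprod_nat⟩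

lemma exists_tendsto_discountedSum {ω : Ω}
    (hc : ∃ l, Tendsto (fun N => ∑ n ∈ range N, c n ω) atTop (𝓝 l)) :
    ∃ s, Tendsto (fun n => discountedSum a c n ω) atTop (𝓝 s) := by
  obtain ⟨l, hl⟩ := hc
  have hanti : Antitone fun k => (growthFactor a (k + 1) ω)⁻¹ := fun i j hij =>
    inv_anti₀ (growthFactor_pos a _ ω) (monotone_growthFactor a ω (by omega))
  have hbdd : BddBelow (Set.range fun k => (growthFactor a (k + 1) ω)⁻¹) :=
    ⟨0, by rintro _ ⟨k, rfl⟩; exact inv_nonneg.mpr (growthFactor_pos a _ ω).le⟩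
  refine cauchySeq_tendsto_of_complete ?_
  simpa only [discountedSum, div_eq_inv_mul] using
    hanti.cauchySeq_series_mul_of_cauchySeq_series hbdd hl.cauchySeq

variable {ℱ : Filtration ℕ m0}

lemma measurable_growthFactor (ha : Adapted ℱ a) {m n : ℕ} (hmn : m ≤ n + 1) :
    Measurable[ℱ n] (growthFactor a m) :=
  Finset.measurable_prod _ fun k hk => measurable_const.add <| measurable_const.max <|
    ((ha k).mono (ℱ.mono (by rw [mem_range] at hk; omega)) le_rfl).neg

lemma measurable_discountedSum (ha : Adapted ℱ a) (hc : Adapted ℱ c) {m n : ℕ}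
    (hmn : m ≤ n + 1) : Measurable[ℱ n] (discountedSum a c m) :=
  Finset.measurable_sum _ fun k hk => by
    rw [mem_range] at hk
    exact ((hc k).mono (ℱ.mono (by omega)) le_rfl).div (measurable_growthFactor ha (by omega))

lemma integrable_div_growthFactor (ha : Adapted ℱ a) {f : Ω → ℝ} (hf : Integrable f μ)
    (n : ℕ) :
    Integrable (fun ω => f ω / growthFactor a n ω) μ := by
  refine hf.mono (hf.1.div₀ ((measurable_growthFactor ha n.le_succ).mono (ℱ.le n) le_rfl
    |>.aestronglyMeasurable)) (Eventually.of_forall fun ω => ?_)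
  rw [norm_div]
  exact div_le_self (norm_nonneg _)
    (by simpa using (one_le_growthFactor a n ω).trans (le_abs_self _))

lemma condExp_div_growthFactor_le {n : ℕ} (ha : Adapted ℱ a) (hZint : Integrable (Z (n + 1)) μ)
    (hZnonneg : 0 ≤ᵐ[μ] Z n)
    (hrec : μ[Z (n + 1)|ℱ n] ≤ᵐ[μ] fun ω => (1 - a n ω) * Z n ω + c n ω) :
    μ[fun ω => Z (n + 1) ω / growthFactor a (n + 1) ω|ℱ n] ≤ᵐ[μ]
      fun ω => Z n ω / growthFactor a n ω + c n ω / growthFactor a (n + 1) ω := by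
  have hpull : μ[fun ω => Z (n + 1) ω / growthFactor a (n + 1) ω|ℱ n] =ᵐ[μ]
      (fun ω => (growthFactor a (n + 1) ω)⁻¹) * μ[Z (n + 1)|ℱ n] := by
    have hint := integrable_div_growthFactor ha hZint (n + 1)
    simp only [div_eq_inv_mul] at hint ⊢
    exact condExp_mul_of_stronglyMeasurable_left
      (measurable_growthFactor ha le_rfl).inv.stronglyMeasurable hint hZint
  filter_upwards [hpull, hrec, hZnonneg] with ω hpullω hrecω hZω
  have hb : 1 - a n ω ≤ 1 + max 0 (-a n ω) := by linarith [le_max_right 0 (-a n ω)]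
  calc (μ[fun ω => Z (n + 1) ω / growthFactor a (n + 1) ω|ℱ n]) ω
      = (growthFactor a (n + 1) ω)⁻¹ * (μ[Z (n + 1)|ℱ n]) ω := hpullω
    _ ≤ (growthFactor a (n + 1) ω)⁻¹ * ((1 + max 0 (-a n ω)) * Z n ω + c n ω) := by
      gcongr
      · exact (inv_pos.mpr (growthFactor_pos a _ ω)).le
      · exact hrecω.trans (by gcongr)
    _ = Z n ω / growthFactor a n ω + c n ω / growthFactor a (n + 1) ω := by
      rw [growthFactor_succ]
      field_simp

theorem supermartingale_div_growthFactor_sub_discountedSum [IsFiniteMeasure μ]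
    (ha : Adapted ℱ a) (hc : Adapted ℱ c) (hZ : Adapted ℱ Z)
    (hcint : ∀ n, Integrable (c n) μ) (hZint : ∀ n, Integrable (Z n) μ)
    (hZnonneg : ∀ n, 0 ≤ᵐ[μ] Z n)
    (hrec : ∀ n, μ[Z (n + 1)|ℱ n] ≤ᵐ[μ] fun ω => (1 - a n ω) * Z n ω + c n ω) :
    Supermartingale (fun n ω => Z n ω / growthFactor a n ω - discountedSum a c n ω) ℱ μ := by
  have hSint (n : ℕ) : Integrable (discountedSum a c n) μ :=
    integrable_finsetSum _ fun k _ => integrable_div_growthFactor ha (hcint k) (k + 1)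
  refine supermartingale_nat (fun n => ?_)
    (fun n => (integrable_div_growthFactor ha (hZint n) n).sub (hSint n)) fun n => ?_
  · exact (((hZ n).div (measurable_growthFactor ha n.le_succ)).sub
      (measurable_discountedSum ha hc n.le_succ)).stronglyMeasurable
  have hsplit : μ[fun ω => Z (n + 1) ω / growthFactor a (n + 1) ω
        - discountedSum a c (n + 1) ω|ℱ n] =ᵐ[μ]
      μ[fun ω => Z (n + 1) ω / growthFactor a (n + 1) ω|ℱ n] - discountedSum a c (n + 1) := by
    refine (condExp_sub (integrable_div_growthFactor ha (hZint _) _) (hSint _) _).trans ?_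
    rw [condExp_of_stronglyMeasurable (ℱ.le n)
      (measurable_discountedSum ha hc le_rfl).stronglyMeasurable (hSint _)]
  filter_upwards [hsplit, condExp_div_growthFactor_le ha (hZint _) (hZnonneg n) (hrec n)]
    with ω hsplitω hle
  rw [hsplitω, Pi.sub_apply, discountedSum, sum_range_succ, ← discountedSum]
  linarith

theorem ae_exists_tendsto [IsFiniteMeasure μ]
    (ha : Adapted ℱ a) (hc : Adapted ℱ c) (hZ : Adapted ℱ Z)
    (hcint : ∀ n, Integrable (c n) μ) (hZint : ∀ n, Integrable (Z n) μ)
    (hZnonneg : ∀ n, 0 ≤ᵐ[μ] Z n)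
    (hrec : ∀ n, μ[Z (n + 1)|ℱ n] ≤ᵐ[μ] fun ω => (1 - a n ω) * Z n ω + c n ω)
    (ha_neg : ∀ᵐ ω ∂μ, Summable fun n => max 0 (-a n ω))
    (hc_sum : ∀ᵐ ω ∂μ, ∃ l, Tendsto (fun N => ∑ n ∈ range N, c n ω) atTop (𝓝 l)) :
    ∀ᵐ ω ∂μ, ∃ l, Tendsto (fun n => Z n ω) atTop (𝓝 l) := by
  have hX :=
    supermartingale_div_growthFactor_sub_discountedSum ha hc hZ hcint hZint hZnonneg hrec
  have hconv := hX.ae_exists_tendsto_of_bddAbove_of_add_nonneg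
    (fun n => measurable_discountedSum ha hc le_rfl) (by ext; simp [discountedSum])
    fun n => by
      filter_upwards [hZnonneg n] with ω hω
      simpa using div_nonneg hω (growthFactor_pos a n ω).le
  filter_upwards [hconv, ha_neg, hc_sum] with ω hXω haω hcω
  obtain ⟨s, hs⟩ := exists_tendsto_discountedSum (a := a) hcω
  obtain ⟨x, hx⟩ := hXω hs.bddAbove_range
  obtain ⟨L, hL⟩ := exists_tendsto_growthFactor haω
  refine ⟨L * (x + s), (hL.mul (hx.add hs)).congr fun n => ?_⟩
  simp only [sub_add_cancel]
  field_simp [(growthFactor_pos a n ω).ne']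

end RobbinsSiegmund

theorem modified_robbins_siegmund_part1_general
    {Ω : Type*} {m0 : MeasurableSpace Ω} {μ : Measure Ω} [IsProbabilityMeasure μ]
    (ℱ : Filtration ℕ m0)
    (a c Z : ℕ → Ω → ℝ)
    (haadapted : Adapted ℱ a) (hcadapted : Adapted ℱ c) (hZadapted : Adapted ℱ Z)
    (hcint : ∀ n, Integrable (c n) μ)
    (hZint : ∀ n, Integrable (Z n) μ) (hZnonneg : ∀ n, 0 ≤ᵐ[μ] Z n)
    (hrec : ∀ n : ℕ, 1 ≤ n →
      μ[Z (n + 1) | ℱ n] ≤ᵐ[μ] fun ω => (1 - a n ω) * Z n ω + c n ω)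
    (haminus : ∀ᵐ ω ∂μ, Summable fun n : ℕ => max 0 (-(a (n + 1) ω)))
    (hcsum : ∀ᵐ ω ∂μ, ∃ l : ℝ,
      Tendsto (fun N => ∑ n ∈ Finset.Icc 1 N, c n ω) atTop (𝓝 l)) :
    ∃ Zlim : Ω → ℝ, (∀ᵐ ω ∂μ, 0 ≤ Zlim ω) ∧
      ∀ᵐ ω ∂μ, Tendsto (fun n => Z n ω) atTop (𝓝 (Zlim ω)) := by
  let ℱ₁ : Filtration ℕ m0 :=
    ⟨fun n => ℱ (n + 1), fun _ _ h => ℱ.mono (by omega), fun _ => ℱ.le _⟩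
  have hcsum₁ :
      ∀ᵐ ω ∂μ, ∃ l, Tendsto (fun N => ∑ n ∈ range N, c (n + 1) ω) atTop (𝓝 l) := by
    filter_upwards [hcsum] with ω ⟨l, hl⟩
    refine ⟨l, hl.congr fun N => ?_⟩
    rw [← Ico_add_one_right_eq_Icc, sum_Ico_eq_sum_range]
    simp [add_comm]
  have hconv := RobbinsSiegmund.ae_exists_tendsto (ℱ := ℱ₁) (fun n => haadapted (n + 1))
    (fun n => hcadapted (n + 1)) (fun n => hZadapted (n + 1)) (fun n => hcint (n + 1))
    (fun n => hZint (n + 1)) (fun n => hZnonneg (n + 1)) (fun n => hrec (n + 1) (by omega))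
    haminus hcsum₁
  have hlim :
      ∀ᵐ ω ∂μ, Tendsto (fun n => Z n ω) atTop (𝓝 (limUnder atTop fun n => Z n ω)) := by
    filter_upwards [hconv] with ω ⟨l, hl⟩
    exact tendsto_nhds_limUnder ⟨l, (tendsto_add_atTop_iff_nat 1).mp hl⟩
  refine ⟨_, ?_, hlim⟩
  filter_upwards [hlim, ae_all_iff.mpr hZnonneg] with ω hω hZω
  exact ge_of_tendsto' hω hZω

/-- Modified Robbins–Siegmund theorem, Part 1: almost sure convergence of `Zₙ` to a
nonnegative finite limit. -/
theorem modified_robbins_siegmund_part1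
    {Ω : Type*} {m0 : MeasurableSpace Ω} {μ : Measure Ω} [IsProbabilityMeasure μ]
    (ℱ : Filtration ℕ m0)
    (a c Z : ℕ → Ω → ℝ)
    (haadapted : Adapted ℱ a) (hcadapted : Adapted ℱ c) (hZadapted : Adapted ℱ Z)
    (haint : ∀ n, Integrable (a n) μ) (hcint : ∀ n, Integrable (c n) μ)
    (hZint : ∀ n, Integrable (Z n) μ) (hZnonneg : ∀ n, 0 ≤ᵐ[μ] Z n)
    (hrec : ∀ n : ℕ, 1 ≤ n →
      μ[Z (n + 1) | ℱ n] ≤ᵐ[μ] fun ω => (1 - a n ω) * Z n ω + c n ω)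
    (haminus : ∀ᵐ ω ∂μ, Summable fun n : ℕ => max 0 (-(a (n + 1) ω)))
    (hcsum : ∀ᵐ ω ∂μ, ∃ l : ℝ,
      Tendsto (fun N => ∑ n ∈ Finset.Icc 1 N, c n ω) atTop (𝓝 l)) :
    ∃ Zlim : Ω → ℝ, (∀ᵐ ω ∂μ, 0 ≤ Zlim ω) ∧
      ∀ᵐ ω ∂μ, Tendsto (fun n => Z n ω) atTop (𝓝 (Zlim ω)) :=
  modified_robbins_siegmund_part1_general ℱ a c Z haadapted hcadapted hZadapted hcint hZint hZnonneg
    hrec haminus hcsum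
end

section
/- Let (𝔉ₙ)_{n≥1} be a filtration, and let (aₙ)_{n≥1}, (cₙ)_{n≥1} be integrable real random variables and (Zₙ)_{n≥1} nonnegative integrable real random variables, all adapted to (𝔉ₙ). Write aₙ^- = max(0, −aₙ) and aₙ^+ = max(0, aₙ). Assume 𝔼[Z_{n+1} | 𝔉ₙ] ≤ (1 − aₙ)·Zₙ + cₙ almost surely for all n ≥ 1, that Σ_{n=1}^∞ aₙ^- < ∞ almost surely, that the series Σ_{n=1}^∞ cₙ converges almost surely to a finite limit, that aₙ^+·Zₙ is integrable for every n, and that Σ_{n=1}^∞ aₙ = +∞ almost surely. Then Zₙ → 0 almost surely. -/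
/-!
Write `bₙ = aₙ⁻`, `pₙ = aₙ⁺` and `Bₙ = ∏_{k<n} (1 + b_k)⁻¹`. Since `1 - aₙ = 1 + bₙ - pₙ` and
`B_{n+1} (1 + bₙ) = Bₙ`, the discounted process `Yₙ = Bₙ Zₙ` satisfies
`𝔼[Y_{n+1} | 𝔉ₙ] ≤ Yₙ - B_{n+1} pₙ Zₙ + B_{n+1} cₙ`, so the negative parts of `a` are absorbed into
the weights. As `Σ bₙ < ∞`, `Bₙ` decreases to a positive limit, and `Σ B_{n+1} cₙ` converges by
Abel's test. A Robbins–Siegmund argument then shows that `Yₙ`, hence `Zₙ`, converges and that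
`Σ pₙ Zₙ < ∞`: the supermartingale `Yₙ + Σ_{k<n} B_{k+1} (p_k Z_k - c_k)`, stopped before the
predictable partial sums of `B_{k+1} c_k` leave `[-R, R]`, is bounded below, hence converges, and
for each path some `R` is never exceeded. Finally, a positive limit of `Zₙ` would give `Σ pₙ < ∞`,
hence `Σ aₙ = Σ pₙ - Σ bₙ < ∞`.
-/

open MeasureTheory Filter Topology Finset

lemma sum_Icc_one_eq_sum_range {M : Type*} [AddCommMonoid M] (f : ℕ → M) (N : ℕ) :
    ∑ n ∈ Icc 1 N, f n = ∑ k ∈ range N, f (k + 1) := by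
  rw [range_eq_Ico, sum_Ico_add' f 0 N 1]
  rfl

/-- Abel's test. -/
theorem Antitone.exists_tendsto_sum_range_mul {u c : ℕ → ℝ} (hu : Antitone u)
    (hbdd : BddBelow (Set.range u)) {s : ℝ}
    (hc : Tendsto (fun n => ∑ k ∈ range n, c k) atTop (𝓝 s)) :
    ∃ l, Tendsto (fun n => ∑ k ∈ range n, u k * c k) atTop (𝓝 l) := by
  set β := ⨅ k, u k
  obtain ⟨K, hK⟩ := hc.norm.bddAbove_range
  have hanti : Antitone fun k => u k - β := fun _ _ h => sub_le_sub_right (hu h) β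
  have hdirichlet : CauchySeq fun n => ∑ k ∈ range n, (u k - β) • c k :=
    hanti.cauchySeq_series_mul_of_tendsto_zero_of_bounded
      (sub_self β ▸ (tendsto_atTop_ciInf hu hbdd).sub_const β) fun n => hK ⟨n, rfl⟩
  obtain ⟨l, hl⟩ := cauchySeq_tendsto_of_complete hdirichlet
  refine ⟨l + β * s, (hl.add (hc.const_mul β)).congr fun n => ?_⟩
  simp only [smul_eq_mul, mul_sum, ← sum_add_distrib, sub_mul, sub_add_cancel]

theorem exists_tendsto_and_summable_of_tendsto_add_sum {y e : ℕ → ℝ} (hy : ∀ n, 0 ≤ y n)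
    (he : ∀ n, 0 ≤ e n) {l : ℝ}
    (h : Tendsto (fun n => y n + ∑ k ∈ range n, e k) atTop (𝓝 l)) :
    (∃ l', Tendsto y atTop (𝓝 l')) ∧ Summable e := by
  obtain ⟨K, hK⟩ := h.bddAbove_range
  have hsum : Summable e :=
    summable_of_sum_range_le he fun n => (le_add_of_nonneg_left (hy n)).trans (hK ⟨n, rfl⟩)
  exact ⟨⟨l - ∑' k, e k, (h.sub hsum.tendsto_sum_tsum_nat).congr fun n => by ring⟩, hsum⟩

lemma max_zero_sub_max_zero_neg (x : ℝ) : max 0 x - max 0 (-x) = x := by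
  simp [max_comm]

theorem not_summable_posPart_of_tendsto_sum {a : ℕ → ℝ}
    (hneg : Summable fun n => max 0 (-a n))
    (hdiv : Tendsto (fun n => ∑ k ∈ range n, a k) atTop atTop) :
    ¬ Summable fun n => max 0 (a n) := fun hpos =>
  not_tendsto_atTop_of_tendsto_nhds
    ((hpos.sub hneg).tendsto_sum_tsum_nat.congr fun _ =>
      sum_congr rfl fun k _ => max_zero_sub_max_zero_neg (a k)) hdiv

theorem eq_zero_of_tendsto_of_summable_mul {z p : ℕ → ℝ} {ζ : ℝ} (hz : ∀ n, 0 ≤ z n)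
    (hp : ∀ n, 0 ≤ p n) (hlim : Tendsto z atTop (𝓝 ζ)) (hpz : Summable fun n => p n * z n)
    (hp_not : ¬ Summable p) : ζ = 0 := by
  by_contra hζ
  have hζpos : 0 < ζ := (ge_of_tendsto' hlim hz).lt_of_ne' hζ
  refine hp_not ((hpz.mul_left (2 / ζ)).of_norm_bounded_eventually ?_)
  filter_upwards [Nat.cofinite_eq_atTop ▸ hlim.eventually (lt_mem_nhds (half_lt_self hζpos))]
    with n hn
  rw [Real.norm_of_nonneg (hp n), div_mul_eq_mul_div, le_div_iff₀ hζpos]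
  nlinarith [hp n]

noncomputable def discountFactor (b : ℕ → ℝ) (n : ℕ) : ℝ := ∏ k ∈ range n, (1 + b k)⁻¹

section discountFactor

variable {b : ℕ → ℝ}

lemma discountFactor_zero : discountFactor b 0 = 1 := prod_range_zero _

lemma discountFactor_succ (n : ℕ) :
    discountFactor b (n + 1) = discountFactor b n * (1 + b n)⁻¹ :=
  prod_range_succ _ _

lemma discountFactor_pos (hb : ∀ n, 0 ≤ b n) (n : ℕ) : 0 < discountFactor b n :=
  prod_pos fun k _ => inv_pos.2 (by linarith [hb k])

lemma discountFactor_succ_mul_one_add (hb : ∀ n, 0 ≤ b n) (n : ℕ) :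
    discountFactor b (n + 1) * (1 + b n) = discountFactor b n := by
  rw [discountFactor_succ, mul_assoc, inv_mul_cancel₀ (by linarith [hb n]), mul_one]

lemma antitone_discountFactor (hb : ∀ n, 0 ≤ b n) : Antitone (discountFactor b) :=
  antitone_nat_of_succ_le fun n => by
    rw [discountFactor_succ]
    exact mul_le_of_le_one_right (discountFactor_pos hb n).le
      (inv_le_one_of_one_le₀ (by linarith [hb n]))

lemma discountFactor_le_one (hb : ∀ n, 0 ≤ b n) (n : ℕ) : discountFactor b n ≤ 1 :=
  (antitone_discountFactor hb n.zero_le).trans_eq discountFactor_zero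

lemma exp_neg_tsum_le_discountFactor (hb : ∀ n, 0 ≤ b n) (hs : Summable b) (n : ℕ) :
    Real.exp (-∑' k, b k) ≤ discountFactor b n :=
  calc Real.exp (-∑' k, b k)
      ≤ Real.exp (-∑ k ∈ range n, b k) :=
        Real.exp_le_exp.2 (neg_le_neg (hs.sum_le_tsum _ fun k _ => hb k))
    _ = ∏ k ∈ range n, (Real.exp (b k))⁻¹ := by
        rw [Real.exp_neg, Real.exp_sum, prod_inv_distrib]
    _ ≤ discountFactor b n :=
        prod_le_prod (fun k _ => (inv_pos.2 (Real.exp_pos _)).le) fun k _ =>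
          inv_anti₀ (by linarith [hb k]) (by linarith [Real.add_one_le_exp (b k)])

lemma exists_pos_tendsto_discountFactor (hb : ∀ n, 0 ≤ b n) (hs : Summable b) :
    ∃ β, 0 < β ∧ Tendsto (discountFactor b) atTop (𝓝 β) :=
  ⟨⨅ n, discountFactor b n,
    (Real.exp_pos _).trans_le (le_ciInf (exp_neg_tsum_le_discountFactor hb hs)),
    tendsto_atTop_ciInf (antitone_discountFactor hb)
      ⟨0, Set.forall_mem_range.2 fun n => (discountFactor_pos hb n).le⟩⟩

end discountFactor

lemma Measurable.discountFactor {Ω : Type*} {m : MeasurableSpace Ω} {b : ℕ → Ω → ℝ} {n : ℕ}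
    (hb : ∀ k < n, Measurable (b k)) : Measurable fun ω => discountFactor (fun k => b k ω) n :=
  Finset.measurable_fun_prod _ fun k hk =>
    (measurable_const.add (hb k (mem_range.1 hk))).inv

lemma discountFactor_succ_mul_one_sub_mul_add (a : ℕ → ℝ) (n : ℕ) (z c : ℝ) :
    discountFactor (fun k => max 0 (-a k)) (n + 1) * ((1 - a n) * z + c) =
      discountFactor (fun k => max 0 (-a k)) n * z
        - discountFactor (fun k => max 0 (-a k)) (n + 1) * (max 0 (a n) * z)
        + discountFactor (fun k => max 0 (-a k)) (n + 1) * c := by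
  linear_combination (discountFactor (fun k => max 0 (-a k)) (n + 1) * z) *
    max_zero_sub_max_zero_neg (a n) +
      z * discountFactor_succ_mul_one_add (fun k => le_max_left 0 (-a k)) n

theorem tendsto_zero_of_summable_discountFactor_mul {a z : ℕ → ℝ} (hz : ∀ n, 0 ≤ z n)
    (hneg : Summable fun n => max 0 (-a n))
    (hdiv : Tendsto (fun n => ∑ k ∈ range n, a k) atTop atTop)
    (hY : ∃ y, Tendsto (fun n => discountFactor (fun k => max 0 (-a k)) n * z n) atTop (𝓝 y))
    (he : Summable fun n => discountFactor (fun k => max 0 (-a k)) (n + 1) * (max 0 (a n) * z n)) :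
    Tendsto z atTop (𝓝 0) := by
  have hb (k : ℕ) : 0 ≤ max 0 (-a k) := le_max_left _ _
  have hp (n : ℕ) : 0 ≤ max 0 (a n) * z n := mul_nonneg (le_max_left _ _) (hz n)
  obtain ⟨β, hβ, hB⟩ := exists_pos_tendsto_discountFactor hb hneg
  obtain ⟨y, hy⟩ := hY
  have hzlim : Tendsto z atTop (𝓝 (y / β)) := (hy.div hB hβ.ne').congr fun n =>
    mul_div_cancel_left₀ (z n) (discountFactor_pos hb n).ne'
  have hpz : Summable fun n => max 0 (a n) * z n :=
    (he.div_const _).of_nonneg_of_le hp fun n => by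
      rw [le_div_iff₀ (Real.exp_pos _), mul_comm]
      exact mul_le_mul_of_nonneg_right (exp_neg_tsum_le_discountFactor hb hneg _) (hp n)
  rwa [eq_zero_of_tendsto_of_summable_mul hz (fun n => le_max_left _ _) hzlim hpz
    (not_summable_posPart_of_tendsto_sum hneg hdiv)] at hzlim

namespace MeasureTheory

lemma exists_stoppedProcess_eq {Ω β : Type*} (u : ℕ → Ω → β) (τ : Ω → WithTop ℕ) (n : ℕ)
    (ω : Ω) : ∃ k : ℕ, (k : WithTop ℕ) ≤ τ ω ∧ stoppedProcess u τ n ω = u k ω := by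
  rcases le_total (n : WithTop ℕ) (τ ω) with h | h
  · exact ⟨n, h, stoppedProcess_eq_of_le h⟩
  · obtain ⟨k, hk⟩ := WithTop.ne_top_iff_exists.1 (ne_top_of_le_ne_top WithTop.coe_ne_top h)
    exact ⟨k, hk.le, by rw [stoppedProcess_eq_of_ge (i := n) h, ← hk]; rfl⟩

lemma notMem_of_le_hittingAfter_succ {Ω β : Type*} {u : ℕ → Ω → β} {s : Set β} {ω : Ω}
    (h0 : u 0 ω ∉ s) {k : ℕ}
    (hk : (k : WithTop ℕ) ≤ hittingAfter (fun n => u (n + 1)) s 0 ω) : u k ω ∉ s := by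
  cases k with
  | zero => exact h0
  | succ j =>
    exact notMem_of_lt_hittingAfter (u := fun n => u (n + 1))
      ((WithTop.coe_lt_coe.2 j.lt_succ_self).trans_le hk) j.zero_le

def Filtration.shift {Ω : Type*} {m : MeasurableSpace Ω} (ℱ : Filtration ℕ m) (k : ℕ) :
    Filtration ℕ m where
  seq n := ℱ (n + k)
  mono' _ _ h := ℱ.mono (Nat.add_le_add_right h k)
  le' n := ℱ.le (n + k)

variable {Ω : Type*} {m0 : MeasurableSpace Ω} {μ : Measure Ω} {𝒢 : Filtration ℕ m0}

lemma condExp_mul_le_mul_of_stronglyMeasurable_left {m : MeasurableSpace Ω} {W Z g : Ω → ℝ}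
    (hW : StronglyMeasurable[m] W) (hW0 : 0 ≤ᵐ[μ] W) (hWZ : Integrable (W * Z) μ)
    (hZ : Integrable Z μ) (h : μ[Z|m] ≤ᵐ[μ] g) : μ[W * Z|m] ≤ᵐ[μ] W * g := by
  filter_upwards [condExp_mul_of_stronglyMeasurable_left hW hWZ hZ, h, hW0] with ω hω hle hW0ω
  rw [hω]
  exact mul_le_mul_of_nonneg_left hle hW0ω

theorem Supermartingale.exists_ae_tendsto_of_bddBelow [IsProbabilityMeasure μ]
    {f : ℕ → Ω → ℝ} {R : ℝ}
    (hf : Supermartingale f 𝒢 μ) (hbdd : ∀ n, ∀ᵐ ω ∂μ, R ≤ f n ω) :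
    ∀ᵐ ω ∂μ, ∃ l, Tendsto (fun n => f n ω) atTop (𝓝 l) := by
  set C := ∫ ω, f 0 ω ∂μ
  set g : ℕ → Ω → ℝ := -f + fun _ _ => C
  have hsub : Submartingale g 𝒢 μ := hf.neg.add_martingale (martingale_const 𝒢 μ C)
  have hmean (n : ℕ) : 0 ≤ ∫ ω, g n ω ∂μ := by
    have := hf.setIntegral_le n.zero_le MeasurableSet.univ
    rw [setIntegral_univ, setIntegral_univ] at this
    have hg : ∫ ω, g n ω ∂μ = ∫ ω, (C - f n ω) ∂μ :=
      integral_congr_ae (ae_of_all _ fun ω => neg_add_eq_sub _ _)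
    rw [hg, integral_sub (integrable_const C) (hf.integrable n), integral_const]
    simp only [probReal_univ, smul_eq_mul, one_mul, C]
    linarith
  have hL1 (n : ℕ) : eLpNorm (g n) 1 μ ≤ (2 * (C - R).toNNReal : NNReal) := by
    have hle : ∀ᵐ ω ∂μ, g n ω ≤ C - R := (hbdd n).mono fun ω hω => by
      show -f n ω + C ≤ C - R
      linarith
    simpa [ENNReal.ofReal] using eLpNorm_one_le_of_le' (hsub.integrable n) (hmean n) hle
  filter_upwards [hsub.exists_ae_tendsto_of_bdd hL1] with ω ⟨l, hl⟩
  exact ⟨C - l, (tendsto_const_nhds.sub hl).congr fun n => by simp [g]⟩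

theorem supermartingale_add_sum_of_condExp_le [IsFiniteMeasure μ] {Y g : ℕ → Ω → ℝ}
    (hY : StronglyAdapted 𝒢 Y) (hg : StronglyAdapted 𝒢 g) (hYint : ∀ n, Integrable (Y n) μ)
    (hgint : ∀ n, Integrable (g n) μ)
    (h : ∀ n, μ[Y (n + 1)|𝒢 n] ≤ᵐ[μ] Y n - g n) :
    Supermartingale (fun n ω => Y n ω + ∑ k ∈ range n, g k ω) 𝒢 μ := by
  have hsum (n : ℕ) : StronglyMeasurable[𝒢 n] fun ω => ∑ k ∈ range (n + 1), g k ω :=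
    stronglyMeasurable_fun_sum _ fun k hk => (hg k).mono (𝒢.mono (mem_range_succ_iff.1 hk))
  have hsumint (n : ℕ) : Integrable (fun ω => ∑ k ∈ range n, g k ω) μ :=
    integrable_finsetSum _ fun k _ => hgint k
  refine supermartingale_nat (fun n => (hY n).add ?_) (fun n => (hYint n).add (hsumint n))
    fun n => ?_
  · cases n with
    | zero => simpa using stronglyMeasurable_const
    | succ n => exact (hsum n).mono (𝒢.mono n.le_succ)
  have hsplit : μ[fun ω => Y (n + 1) ω + ∑ k ∈ range (n + 1), g k ω|𝒢 n]
      =ᵐ[μ] μ[Y (n + 1)|𝒢 n] + fun ω => ∑ k ∈ range (n + 1), g k ω := by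
    rw [← condExp_of_stronglyMeasurable (𝒢.le n) (hsum n) (hsumint (n + 1))]
    exact condExp_add (hYint (n + 1)) (hsumint (n + 1)) _
  filter_upwards [hsplit, h n] with ω hω hle
  rw [hω]
  simp only [Pi.add_apply, sum_range_succ]
  simp only [Pi.sub_apply] at hle
  linarith

theorem Supermartingale.ae_exists_tendsto_of_bddAbove_abs [IsProbabilityMeasure μ] {M D : ℕ → Ω → ℝ}
    (hM : Supermartingale M 𝒢 μ) (hD : Adapted 𝒢 fun n => D (n + 1)) (hD0 : ∀ ω, D 0 ω = 0)
    (hMD : ∀ᵐ ω ∂μ, ∀ n, -|D n ω| ≤ M n ω) :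
    ∀ᵐ ω ∂μ, BddAbove (Set.range fun n => |D n ω|) →
      ∃ l, Tendsto (fun n => M n ω) atTop (𝓝 l) := by
  set τ : ℕ → Ω → WithTop ℕ := fun R => hittingAfter (fun n => D (n + 1)) {x | (R : ℝ) < |x|} 0
  have hτ (R : ℕ) : IsStoppingTime 𝒢 (τ R) :=
    hD.isStoppingTime_hittingAfter (measurableSet_lt measurable_const measurable_abs)
  have hstopped (R : ℕ) : Supermartingale (stoppedProcess M (τ R)) 𝒢 μ := by
    simpa using (hM.neg.stoppedProcess (hτ R)).neg
  have hbdd (R : ℕ) (n : ℕ) : ∀ᵐ ω ∂μ, -(R : ℝ) ≤ stoppedProcess M (τ R) n ω := by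
    filter_upwards [hMD] with ω hω
    obtain ⟨k, hk, heq⟩ := exists_stoppedProcess_eq M (τ R) n ω
    have hDk : |D k ω| ≤ R :=
      not_lt.1 (notMem_of_le_hittingAfter_succ (s := {x | (R : ℝ) < |x|})
        (by simp [hD0]) hk)
    rw [heq]
    linarith [hω k]
  filter_upwards [ae_all_iff.2 fun R => (hstopped R).exists_ae_tendsto_of_bddBelow (hbdd R)]
    with ω hconv ⟨K, hK⟩
  obtain ⟨l, hl⟩ := hconv ⌈K⌉₊
  have hτtop : τ ⌈K⌉₊ ω = ⊤ := hittingAfter_eq_top_iff.2 fun n _ =>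
    not_lt.2 ((hK ⟨n + 1, rfl⟩).trans (Nat.le_ceil K))
  exact ⟨l, hl.congr fun n => stoppedProcess_eq_of_le (hτtop ▸ le_top)⟩

theorem ae_exists_tendsto_and_summable_of_condExp_le [IsProbabilityMeasure μ] {Y d e : ℕ → Ω → ℝ}
    (hY : StronglyAdapted 𝒢 Y) (hd : StronglyAdapted 𝒢 d) (he : StronglyAdapted 𝒢 e)
    (hYint : ∀ n, Integrable (Y n) μ) (hdint : ∀ n, Integrable (d n) μ)
    (heint : ∀ n, Integrable (e n) μ) (hYnonneg : ∀ n, 0 ≤ᵐ[μ] Y n)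
    (henonneg : ∀ n, 0 ≤ᵐ[μ] e n) (hrec : ∀ n, μ[Y (n + 1)|𝒢 n] ≤ᵐ[μ] Y n - e n + d n)
    (hdsum : ∀ᵐ ω ∂μ, ∃ l, Tendsto (fun n => ∑ k ∈ range n, d k ω) atTop (𝓝 l)) :
    ∀ᵐ ω ∂μ, (∃ l, Tendsto (fun n => Y n ω) atTop (𝓝 l)) ∧ Summable fun n => e n ω := by
  have hM : Supermartingale (fun n ω => Y n ω + ∑ k ∈ range n, (e - d) k ω) 𝒢 μ :=
    supermartingale_add_sum_of_condExp_le hY (he.sub hd) hYint (fun n => (heint n).sub (hdint n))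
      fun n => (hrec n).trans_eq (Eventually.of_forall fun ω => by
        simp only [Pi.sub_apply, Pi.add_apply]; ring)
  have hD : Adapted 𝒢 fun n ω => ∑ k ∈ range (n + 1), d k ω := fun n =>
    (stronglyMeasurable_fun_sum _ fun k hk =>
      (hd k).mono (𝒢.mono (mem_range_succ_iff.1 hk))).measurable
  have hMD : ∀ᵐ ω ∂μ, ∀ n, -|∑ k ∈ range n, d k ω| ≤ Y n ω + ∑ k ∈ range n, (e - d) k ω := by
    filter_upwards [ae_all_iff.2 hYnonneg, ae_all_iff.2 henonneg] with ω hYω heω n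
    simp only [Pi.zero_apply] at hYω heω
    simp only [Pi.sub_apply, sum_sub_distrib]
    linarith [hYω n, sum_nonneg fun k (_ : k ∈ range n) => heω k,
      le_abs_self (∑ k ∈ range n, d k ω)]
  filter_upwards [hM.ae_exists_tendsto_of_bddAbove_abs hD (fun _ => sum_range_zero _) hMD,
    hdsum, ae_all_iff.2 hYnonneg, ae_all_iff.2 henonneg] with ω hMω ⟨lD, hlD⟩ hYω heω
  simp only [Pi.zero_apply] at hYω heω
  obtain ⟨lM, hlM⟩ := hMω hlD.abs.bddAbove_range
  exact exists_tendsto_and_summable_of_tendsto_add_sum hYω heω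
    ((hlM.add hlD).congr fun n => by simp only [Pi.sub_apply, sum_sub_distrib]; ring)

theorem ae_tendsto_zero_of_condExp_le_one_sub_mul_add [IsProbabilityMeasure μ]
    {a c Z : ℕ → Ω → ℝ} (ha : Adapted 𝒢 a) (hc : Adapted 𝒢 c) (hZ : Adapted 𝒢 Z)
    (hcint : ∀ n, Integrable (c n) μ) (hZint : ∀ n, Integrable (Z n) μ)
    (hZnonneg : ∀ n, 0 ≤ᵐ[μ] Z n)
    (hrec : ∀ n, μ[Z (n + 1)|𝒢 n] ≤ᵐ[μ] fun ω => (1 - a n ω) * Z n ω + c n ω)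
    (haneg : ∀ᵐ ω ∂μ, Summable fun n => max 0 (-a n ω))
    (hcsum : ∀ᵐ ω ∂μ, ∃ l, Tendsto (fun n => ∑ k ∈ range n, c k ω) atTop (𝓝 l))
    (haposZ : ∀ n, Integrable (fun ω => max 0 (a n ω) * Z n ω) μ)
    (hasum : ∀ᵐ ω ∂μ, Tendsto (fun n => ∑ k ∈ range n, a k ω) atTop atTop) :
    ∀ᵐ ω ∂μ, Tendsto (fun n => Z n ω) atTop (𝓝 0) := by
  set B : ℕ → Ω → ℝ := fun n ω => discountFactor (fun k => max 0 (-a k ω)) n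
  have hb (ω : Ω) (k : ℕ) : 0 ≤ max 0 (-a k ω) := le_max_left _ _
  have hBpos (n : ℕ) (ω : Ω) : 0 < B n ω := discountFactor_pos (hb ω) n
  have hBmeas (n k : ℕ) (hk : k ≤ n + 1) : StronglyMeasurable[𝒢 n] (B k) :=
    (Measurable.discountFactor fun j hj =>
      measurable_const.max (ha.measurable_le (by omega)).neg).stronglyMeasurable
  have hBint {f : Ω → ℝ} (hf : Integrable f μ) (n : ℕ) :
      Integrable (fun ω => B n ω * f ω) μ :=
    hf.bdd_mul ((hBmeas n n (by omega)).mono (𝒢.le n)).aestronglyMeasurable <|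
      ae_of_all _ fun ω => by
        rw [Real.norm_of_nonneg (hBpos n ω).le]
        exact discountFactor_le_one (hb ω) n
  have hYrec (n : ℕ) : μ[fun ω => B (n + 1) ω * Z (n + 1) ω|𝒢 n] ≤ᵐ[μ] fun ω =>
      B n ω * Z n ω - B (n + 1) ω * (max 0 (a n ω) * Z n ω) + B (n + 1) ω * c n ω :=
    (condExp_mul_le_mul_of_stronglyMeasurable_left (hBmeas n (n + 1) le_rfl)
      (ae_of_all _ fun ω => (hBpos (n + 1) ω).le) (hBint (hZint (n + 1)) (n + 1))
      (hZint (n + 1)) (hrec n)).trans_eq <| ae_of_all _ fun ω =>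
        discountFactor_succ_mul_one_sub_mul_add (a · ω) n (Z n ω) (c n ω)
  have hdsum : ∀ᵐ ω ∂μ, ∃ l,
      Tendsto (fun n => ∑ k ∈ range n, B (k + 1) ω * c k ω) atTop (𝓝 l) := by
    filter_upwards [hcsum] with ω ⟨l, hl⟩
    exact Antitone.exists_tendsto_sum_range_mul
      (fun i j hij => antitone_discountFactor (hb ω) (Nat.succ_le_succ hij))
      ⟨0, Set.forall_mem_range.2 fun n => (hBpos (n + 1) ω).le⟩ hl
  filter_upwards [ae_exists_tendsto_and_summable_of_condExp_le
      (fun n => (hBmeas n n (by omega)).mul (hZ n).stronglyMeasurable)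
      (fun n => (hBmeas n (n + 1) le_rfl).mul (hc n).stronglyMeasurable)
      (fun n => (hBmeas n (n + 1) le_rfl).mul
        ((measurable_const.max (ha n)).mul (hZ n)).stronglyMeasurable)
      (fun n => hBint (hZint n) n) (fun n => hBint (hcint n) (n + 1))
      (fun n => hBint (haposZ n) (n + 1))
      (fun n => (hZnonneg n).mono fun ω hω => mul_nonneg (hBpos n ω).le hω)
      (fun n => (hZnonneg n).mono fun ω hω =>
        mul_nonneg (hBpos (n + 1) ω).le (mul_nonneg (le_max_left _ _) hω))
      hYrec hdsum,
    haneg, hasum, ae_all_iff.2 hZnonneg] with ω ⟨hY, he⟩ hnegω hdiv hZω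
  exact tendsto_zero_of_summable_discountFactor_mul hZω hnegω hdiv hY he

end MeasureTheory

theorem modified_robbins_siegmund_part2_general
    {Ω : Type*} {m0 : MeasurableSpace Ω} {μ : Measure Ω} [IsProbabilityMeasure μ]
    (ℱ : Filtration ℕ m0)
    (a c Z : ℕ → Ω → ℝ)
    (haadapted : Adapted ℱ a) (hcadapted : Adapted ℱ c) (hZadapted : Adapted ℱ Z)
    (hcint : ∀ n, Integrable (c n) μ)
    (hZint : ∀ n, Integrable (Z n) μ) (hZnonneg : ∀ n, 0 ≤ᵐ[μ] Z n)
    (hrec : ∀ n : ℕ, 1 ≤ n →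
      μ[Z (n + 1) | ℱ n] ≤ᵐ[μ] fun ω => (1 - a n ω) * Z n ω + c n ω)
    (haminus : ∀ᵐ ω ∂μ, Summable fun n : ℕ => max 0 (-(a (n + 1) ω)))
    (hcsum : ∀ᵐ ω ∂μ, ∃ l : ℝ,
      Tendsto (fun N => ∑ n ∈ Finset.Icc 1 N, c n ω) atTop (𝓝 l))
    (haplusZ : ∀ n, Integrable (fun ω => max 0 (a n ω) * Z n ω) μ)
    (hasum : ∀ᵐ ω ∂μ, Tendsto (fun N => ∑ n ∈ Finset.Icc 1 N, a n ω) atTop atTop) :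
    ∀ᵐ ω ∂μ, Tendsto (fun n => Z n ω) atTop (𝓝 0) := by
  simp only [sum_Icc_one_eq_sum_range] at hcsum hasum
  filter_upwards [ae_tendsto_zero_of_condExp_le_one_sub_mul_add (𝒢 := ℱ.shift 1)
    (fun n => haadapted (n + 1)) (fun n => hcadapted (n + 1)) (fun n => hZadapted (n + 1))
    (fun n => hcint (n + 1)) (fun n => hZint (n + 1)) (fun n => hZnonneg (n + 1))
    (fun n => hrec (n + 1) (Nat.le_add_left 1 n)) haminus hcsum (fun n => haplusZ (n + 1))
    hasum] with ω hω
  exact (tendsto_add_atTop_iff_nat 1).1 hω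

/-- Modified Robbins–Siegmund theorem, Part 2: if moreover `aₙ⁺·Zₙ` is integrable and
`Σ aₙ = +∞` almost surely, then `Zₙ → 0` almost surely. -/
theorem modified_robbins_siegmund_part2
    {Ω : Type*} {m0 : MeasurableSpace Ω} {μ : Measure Ω} [IsProbabilityMeasure μ]
    (ℱ : Filtration ℕ m0)
    (a c Z : ℕ → Ω → ℝ)
    (haadapted : Adapted ℱ a) (hcadapted : Adapted ℱ c) (hZadapted : Adapted ℱ Z)
    (haint : ∀ n, Integrable (a n) μ) (hcint : ∀ n, Integrable (c n) μ)
    (hZint : ∀ n, Integrable (Z n) μ) (hZnonneg : ∀ n, 0 ≤ᵐ[μ] Z n)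
    (hrec : ∀ n : ℕ, 1 ≤ n →
      μ[Z (n + 1) | ℱ n] ≤ᵐ[μ] fun ω => (1 - a n ω) * Z n ω + c n ω)
    (haminus : ∀ᵐ ω ∂μ, Summable fun n : ℕ => max 0 (-(a (n + 1) ω)))
    (hcsum : ∀ᵐ ω ∂μ, ∃ l : ℝ,
      Tendsto (fun N => ∑ n ∈ Finset.Icc 1 N, c n ω) atTop (𝓝 l))
    (haplusZ : ∀ n, Integrable (fun ω => max 0 (a n ω) * Z n ω) μ)
    (hasum : ∀ᵐ ω ∂μ, Tendsto (fun N => ∑ n ∈ Finset.Icc 1 N, a n ω) atTop atTop) :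
    ∀ᵐ ω ∂μ, Tendsto (fun n => Z n ω) atTop (𝓝 0) :=
  modified_robbins_siegmund_part2_general ℱ a c Z haadapted hcadapted hZadapted hcint hZint hZnonneg
    hrec haminus hcsum haplusZ hasum
end
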